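/- arXiv:1409.2508 — 4 statements merged into one kernel-verified Lean document; each statement's English description precedes it below -/
import Mathlib

section
/- Let L be a relational coloring language and W a set of allowed diagrams in L. For every w ∈ W, the following are equivalent: (1) ER(w;W) = ∞; (2) ER(w;W) ≥ |L|⁺; (3) there is an infinite set M and a coloring c of M such that (M,c) ∈ K(W), M itself is monochromatic for c, and the diagram d_M of M extends w (i.e., d_M(k) = w(k) for all k in the domain of w). -/
universe u v

open Cardinal

/-- A relational coloring language: a family of pairwise disjoint nonempty sets `R_n`
(`n ≥ 1`) of `n`-ary colors, encoded as a type of colors together with an arity map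
whose fibers over `n ≥ 1` are all nonempty. -/
structure ColoringLanguage : Type (u + 1) where
  Color : Type u
  arity : Color → ℕ
  arity_pos : ∀ r, 1 ≤ arity r
  exists_arity : ∀ n : ℕ, 1 ≤ n → ∃ r, arity r = n

namespace ColoringLanguage

variable (L : ColoringLanguage.{u})

/-- A diagram is (encoded as) a list of colors whose `i`-th entry (0-based) is an
`(i+1)`-ary color; it represents the function `w : [n] → R` with `w(k) ∈ R_k`. -/
def IsDiagram (l : List L.Color) : Prop :=
  ∀ (i : ℕ) (h : i < l.length), L.arity l[i] = i + 1

/-- A set of allowed diagrams: a nonempty set of diagrams closed under restriction to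
initial segments. -/
def IsAllowed (W : Set (List L.Color)) : Prop :=
  W.Nonempty ∧ (∀ l ∈ W, L.IsDiagram l) ∧ ∀ l ∈ W, ∀ m : ℕ, l.take m ∈ W

end ColoringLanguage

/-- `ERge W γ l` says that the existence rank of `l` with respect to `W` is `≥ γ`:
`ER(l;W) ≥ β + 1` iff some one-step extension `l' ∈ W` of `l` has `ER(l';W) ≥ β`,
with the limit (and zero) clauses as usual. -/
noncomputable def ERge {C : Type v} (W : Set (List C)) : Ordinal.{u} → List C → Prop :=
  WellFounded.fix Ordinal.lt_wf fun α IH l =>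
    ∀ β, ∀ h : β < α,
      ∃ l' ∈ W, l'.length = l.length + 1 ∧ l'.take l.length = l ∧ IH β h l'

/-- `prunedW W S` is `W_S`, the set of elements of `W` comparable with some element of `S`. -/
def prunedW {C : Type v} (W S : Set (List C)) : Set (List C) :=
  {w ∈ W | ∃ u ∈ S, w <+: u ∨ u <+: w}

/-- `quotW W wbar` is `W / w̄`: the set of diagrams `w / w̄` for `w ∈ W` extending `w̄`. -/
def quotW {C : Type v} (W : Set (List C)) (wbar : List C) : Set (List C) :=
  (fun l => l.drop wbar.length) '' {l ∈ W | wbar <+: l}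

/-- The beth function with base `κ`: `ℶ_0(κ) = κ`, `ℶ_{α+1}(κ) = 2 ^ ℶ_α(κ)`,
and suprema at limits. -/
noncomputable def bethF (κ : Cardinal.{u}) (o : Ordinal.{u}) : Cardinal.{u} :=
  Ordinal.limitRecOn o κ (fun _ ih => 2 ^ ih)
    fun o' _ ih => ⨆ b : Set.Iio o', ih b.1 b.2

/-- The cardinals `κ_α`: `κ_α = α` for finite `α`, suprema at limits, and
`κ_{β+1} = 2 ^ κ_β` for `β ≥ ω`. -/
noncomputable def kappaC (o : Ordinal.{u}) : Cardinal.{u} :=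
  Ordinal.limitRecOn o 0
    (fun o' ih => if o' < Ordinal.omega0 then ih + 1 else 2 ^ ih)
    fun o' _ ih => ⨆ b : Set.Iio o', ih b.1 b.2

namespace ColoringLanguage

variable (L : ColoringLanguage.{u}) {σ τ : Type u}

/-- `c` is an `L`-coloring of the set `M`: every finite nonempty `A ⊆ M` gets a color
of arity `|A|`. (Values of `c` outside of `M` are irrelevant.) -/
def IsColoring (M : Set σ) (c : Finset σ → L.Color) : Prop :=
  ∀ A : Finset σ, ↑A ⊆ M → A.Nonempty → L.arity (c A) = A.card

/-- `B` is monochromatic for `c`: any two finite nonempty subsets of `B` of equal size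
get the same color. -/
def Mono (c : Finset σ → L.Color) (B : Set σ) : Prop :=
  ∀ A₁ A₂ : Finset σ, ↑A₁ ⊆ B → ↑A₂ ⊆ B → A₁.Nonempty → A₁.card = A₂.card → c A₁ = c A₂

/-- `l` is the diagram of the (monochromatic) finite set `B` under `c`. -/
def DiagramOf (c : Finset σ → L.Color) (B : Finset σ) (l : List L.Color) : Prop :=
  l.length = B.card ∧ ∀ A : Finset σ, A ⊆ B → A.Nonempty → l[A.card - 1]? = some (c A)

/-- `(M,c)` is a member of the coloring class `K(W)`: `c` is an `L`-coloring of `M`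
and every finite nonempty monochromatic subset of `M` has its diagram in `W`. -/
def MemK (W : Set (List L.Color)) (M : Set σ) (c : Finset σ → L.Color) : Prop :=
  L.IsColoring M c ∧
    ∀ B : Finset σ, ↑B ⊆ M → B.Nonempty → L.Mono c ↑B → ∃ l ∈ W, L.DiagramOf c B l

/-- `(M,c)` is a substructure of `(N,c')`. -/
def Substruct (M : Set σ) (c : Finset σ → L.Color) (N : Set σ)
    (c' : Finset σ → L.Color) : Prop :=
  M ⊆ N ∧ ∀ A : Finset σ, ↑A ⊆ M → A.Nonempty → c A = c' A

/-- `f` is an embedding of `(M,c)` into `(N,c')`. -/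
def Emb (f : σ → τ) (M : Set σ) (c : Finset σ → L.Color) (N : Set τ)
    (c' : Finset τ → L.Color) : Prop :=
  Set.InjOn f M ∧ f '' M ⊆ N ∧
    ∀ A : Finset σ, ↑A ⊆ M → A.Nonempty →
      haveI := Classical.decEq τ
      c' (A.image f) = c A

/-- `K(W)` has the amalgamation property for models of size `lam`. -/
def HasAPAt (W : Set (List L.Color)) (lam : Cardinal.{u}) : Prop :=
  ∀ (σ : Type u) (M₀ M₁ M₂ : Set σ) (c₀ c₁ c₂ : Finset σ → L.Color),
    L.MemK W M₀ c₀ → L.MemK W M₁ c₁ → L.MemK W M₂ c₂ →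
    Cardinal.mk ↥M₀ = lam → Cardinal.mk ↥M₁ = lam → Cardinal.mk ↥M₂ = lam →
    L.Substruct M₀ c₀ M₁ c₁ → L.Substruct M₀ c₀ M₂ c₂ →
    ∃ (τ : Type u) (N : Set τ) (c : Finset τ → L.Color) (f₁ f₂ : σ → τ),
      L.MemK W N c ∧ L.Emb f₁ M₁ c₁ N c ∧ L.Emb f₂ M₂ c₂ N c ∧
      ∀ x ∈ M₀, f₁ x = f₂ x

/-- `K(W)` has the disjoint amalgamation property for models of size `lam`. -/
def HasDAPAt (W : Set (List L.Color)) (lam : Cardinal.{u}) : Prop :=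
  ∀ (σ : Type u) (M₀ M₁ M₂ : Set σ) (c₀ c₁ c₂ : Finset σ → L.Color),
    L.MemK W M₀ c₀ → L.MemK W M₁ c₁ → L.MemK W M₂ c₂ →
    Cardinal.mk ↥M₀ = lam → Cardinal.mk ↥M₁ = lam → Cardinal.mk ↥M₂ = lam →
    L.Substruct M₀ c₀ M₁ c₁ → L.Substruct M₀ c₀ M₂ c₂ →
    ∃ (τ : Type u) (N : Set τ) (c : Finset τ → L.Color) (f₁ f₂ : σ → τ),
      L.MemK W N c ∧ L.Emb f₁ M₁ c₁ N c ∧ L.Emb f₂ M₂ c₂ N c ∧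
      (∀ x ∈ M₀, f₁ x = f₂ x) ∧ f₁ '' M₁ ∩ f₂ '' M₂ = f₁ '' M₀

end ColoringLanguage

/-! A branch of `W` through `w` is a stream all of whose finite prefixes lie in `W` and which
begins with `w`. Such a branch gives existence rank `∞` to each of its prefixes, and is the same
thing as the diagram of an infinite monochromatic member of `K(W)` extending `w`. Conversely,
rank `≥ |L|⁺` propagates to some one-step extension, because `|L|⁺` is regular and there are only
`|L|` candidate extensions; iterating this yields a branch through `w`. -/

theorem Stream'.take_length_eq_of_forall_getElem? {α : Type*} {s : Stream' α} {l : List α}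
    (h : ∀ i < l.length, l[i]? = some (s.get i)) : s.take l.length = l := by
  refine List.ext_getElem? fun i => ?_
  rcases lt_or_ge i l.length with hi | hi
  · rw [Stream'.getElem?_take hi, h i hi]
  · rw [List.getElem?_eq_none (by simpa using hi), List.getElem?_eq_none hi]

theorem Stream'.exists_forall_append_take {α : Type*} {P : List α → Prop}
    (hP : ∀ l, P l → ∃ a, P (l ++ [a])) {l : List α} (hl : P l) :
    ∃ s : Stream' α, ∀ n, P (l ++ s.take n) := by
  choose next hnext using hP
  let extend : {l // P l} → {l // P l} := fun x => ⟨x.1 ++ [next x.1 x.2], hnext x.1 x.2⟩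
  let chain : ℕ → {l // P l} := fun n => extend^[n] ⟨l, hl⟩
  let s : Stream' α := fun n => next (chain n).1 (chain n).2
  have hchain : ∀ n, (chain n).1 = l ++ s.take n := by
    intro n
    induction n with
    | zero => simp [chain]
    | succ n ih =>
      simp only [chain, Function.iterate_succ_apply', ← Stream'.concat_take_get]
      rw [← List.append_assoc, ← ih]
      rfl
  exact ⟨s, fun n => hchain n ▸ (chain n).2⟩

section ExistenceRank

variable {C : Type v} {W : Set (List C)}

theorem ERge_iff {γ : Ordinal.{u}} {l : List C} :
    ERge W γ l ↔ ∀ β < γ, ∃ r, l ++ [r] ∈ W ∧ ERge W β (l ++ [r]) := by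
  rw [ERge, WellFounded.fix_eq]
  refine forall₂_congr fun β _ => ⟨?_, ?_⟩
  · rintro ⟨l', hl'W, hlen, htake, hER⟩
    obtain ⟨r, hr⟩ : ∃ r, l'.drop l.length = [r] :=
      List.length_eq_one_iff.1 (by simp [hlen])
    have hl' : l' = l ++ [r] := by rw [← List.take_append_drop l.length l', htake, hr]
    exact ⟨r, hl' ▸ hl'W, hl' ▸ hER⟩
  · rintro ⟨r, hrW, hER⟩
    exact ⟨l ++ [r], hrW, by simp, by simp, hER⟩

theorem ERge.mono {β γ : Ordinal.{u}} {l : List C} (hβγ : β ≤ γ) (h : ERge W γ l) :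
    ERge W β l :=
  ERge_iff.2 fun δ hδ => ERge_iff.1 h δ (hδ.trans_le hβγ)

theorem ERge_of_isSuccLimit {γ : Ordinal.{u}} (hγ : Order.IsSuccLimit γ) {l : List C}
    (h : ∀ β < γ, ERge W β l) : ERge W γ l :=
  ERge_iff.2 fun β hβ => ERge_iff.1 (h _ (hγ.succ_lt hβ)) β (Order.lt_succ β)

theorem ERge_take_of_forall_take_mem {d : Stream' C} (hd : ∀ n, d.take n ∈ W)
    (γ : Ordinal.{u}) (n : ℕ) : ERge W γ (d.take n) := by
  induction γ using WellFoundedLT.induction generalizing n with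
  | _ γ ih =>
    refine ERge_iff.2 fun β hβ => ⟨d.get n, ?_, ?_⟩ <;> rw [Stream'.concat_take_get]
    exacts [hd (n + 1), ih β hβ (n + 1)]

end ExistenceRank

section SuccessorCardinal

variable {C : Type u} [Infinite C] {W : Set (List C)}

theorem exists_ERge_append_of_ERge_succ_ord {l : List C}
    (h : ERge W (Order.succ #C).ord l) :
    ∃ r, l ++ [r] ∈ W ∧ ERge W (Order.succ #C).ord (l ++ [r]) := by
  have hκ : ℵ₀ ≤ #C := aleph0_le_mk C
  have hlim : Order.IsSuccLimit (Order.succ #C).ord :=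
    isSuccLimit_ord (hκ.trans (Order.le_succ _))
  by_contra! hnone
  -- each candidate `l ++ [r]` fails at some rank `F r < |C|⁺`; by regularity so does their sup
  have hbound : ∀ r, ∃ β < (Order.succ #C).ord, ¬ (l ++ [r] ∈ W ∧ ERge W β (l ++ [r])) := by
    intro r
    by_contra! hall
    by_cases hr : l ++ [r] ∈ W
    · exact hnone r hr (ERge_of_isSuccLimit hlim fun β hβ => (hall β hβ).2)
    · exact hr (hall 0 hlim.bot_lt).1
  choose F hFlt hF using hbound
  have hsup : ⨆ r, F r < (Order.succ #C).ord :=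
    Ordinal.iSup_lt_of_lt_cof (by rw [(isRegular_succ hκ).cof_ord]; exact Order.lt_succ _) hFlt
  obtain ⟨r, hrW, hER⟩ := ERge_iff.1 h _ hsup
  exact hF r ⟨hrW, hER.mono (Ordinal.le_iSup F r)⟩

theorem exists_branch_of_ERge_succ_ord (hW : ∀ l ∈ W, ∀ m, l.take m ∈ W) {w : List C}
    (hw : w ∈ W) (h : ERge W (Order.succ #C).ord w) :
    ∃ d : Stream' C, (∀ n, d.take n ∈ W) ∧ d.take w.length = w := by
  obtain ⟨s, hs⟩ := Stream'.exists_forall_append_take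
    (P := fun l => l ∈ W ∧ ERge W (Order.succ #C).ord l)
    (fun l hl => (exists_ERge_append_of_ERge_succ_ord hl.2).imp fun _ => id) ⟨hw, h⟩
  refine ⟨w ++ₛ s, fun n => ?_, by simp [Stream'.take_append_of_le_length]⟩
  have hprefix : (w ++ s.take n) ∈ W := (hs n).1
  rw [Stream'.append_take] at hprefix
  simpa using hW _ hprefix n

end SuccessorCardinal

namespace ColoringLanguage

variable (L : ColoringLanguage.{u})

instance : Infinite L.Color :=
  Infinite.of_surjective (fun r => L.arity r - 1) fun n =>
    (L.exists_arity (n + 1) (by omega)).imp fun _ hr => by simp [hr]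

variable {L} {σ : Type u} {W : Set (List L.Color)} {c : Finset σ → L.Color}

theorem memK_of_forall_take_mem (hW : L.IsAllowed W) {d : Stream' L.Color}
    (hd : ∀ n, d.take n ∈ W) (M : Set σ) :
    L.MemK W M (fun A => d.get (A.card - 1)) := by
  refine ⟨fun A _ hA => ?_, fun B _ _ _ => ⟨d.take B.card, hd _, by simp, fun A hAB hA => ?_⟩⟩
  · have hpos := hA.card_pos
    have harity := hW.2.1 _ (hd A.card) (A.card - 1) (by simp; omega)
    rwa [Stream'.take_get, Nat.sub_add_cancel hpos] at harity
  · exact Stream'.getElem?_take (by have := Finset.card_le_card hAB; have := hA.card_pos; omega)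

theorem exists_branch_of_memK (hW : L.IsAllowed W) {M : Set σ} (hM : M.Infinite)
    (hK : L.MemK W M c) (hmono : L.Mono c M) :
    ∃ d : Stream' L.Color, (∀ n, d.take n ∈ W) ∧
      ∀ A : Finset σ, ↑A ⊆ M → A.Nonempty → d.get (A.card - 1) = c A := by
  choose S hSM hScard using hM.exists_subset_card_eq
  have hSne : ∀ n, 0 < n → (S n).Nonempty := fun n hn => by rwa [← Finset.card_pos, hScard]
  let d : Stream' L.Color := fun k => c (S (k + 1))
  have hd : ∀ A : Finset σ, ↑A ⊆ M → A.Nonempty → d.get (A.card - 1) = c A := by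
    intro A hAM hA
    have hpos := hA.card_pos
    exact hmono _ _ (hSM _) hAM (hSne _ (by omega)) (by rw [hScard]; omega)
  have hdW : ∀ n, 0 < n → d.take n ∈ W := by
    intro n hn
    have hmonoS : L.Mono c ↑(S n) := fun A₁ A₂ h₁ h₂ =>
      hmono A₁ A₂ (h₁.trans (hSM n)) (h₂.trans (hSM n))
    obtain ⟨l, hlW, hlen, hl⟩ := hK.2 (S n) (hSM n) (hSne n hn) hmonoS
    convert hlW
    rw [← hScard n, ← hlen]
    refine Stream'.take_length_eq_of_forall_getElem? fun i hi => ?_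
    obtain ⟨A, hAS, hAcard⟩ := Finset.exists_subset_card_eq (s := S n) (n := i + 1) (by omega)
    have hA : A.Nonempty := by rw [← Finset.card_pos, hAcard]; omega
    obtain rfl : i = A.card - 1 := by omega
    rw [hl A hAS hA, hd A ((Finset.coe_subset.2 hAS).trans (hSM n)) hA]
  refine ⟨d, fun n => ?_, hd⟩
  simpa [Stream'.take_take] using hW.2.2 _ (hdW (n + 1) n.succ_pos) n

end ColoringLanguage

/-- For `w ∈ W`, TFAE: (1) `ER(w;W) = ∞`; (2) `ER(w;W) ≥ |L|⁺`;
(3) there is an infinite monochromatic `(M,c) ∈ K(W)` whose diagram extends `w`. -/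
theorem stmt0 (L : ColoringLanguage.{u}) (W : Set (List L.Color))
    (hW : L.IsAllowed W) (w : List L.Color) (hw : w ∈ W) :
    ((∀ γ : Ordinal.{u}, ERge W γ w) ↔
        ERge W (Order.succ (Cardinal.mk L.Color)).ord w) ∧
      ((∀ γ : Ordinal.{u}, ERge W γ w) ↔
        ∃ (σ : Type u) (M : Set σ) (c : Finset σ → L.Color),
          M.Infinite ∧ L.MemK W M c ∧ L.Mono c M ∧
            ∀ A : Finset σ, ↑A ⊆ M → A.Nonempty → A.card ≤ w.length →
              w[A.card - 1]? = some (c A)) := by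
  have of_branch : ∀ d : Stream' L.Color, (∀ n, d.take n ∈ W) → d.take w.length = w →
      ∀ γ : Ordinal.{u}, ERge W γ w := fun d hd hdw γ =>
    hdw ▸ ERge_take_of_forall_take_mem hd γ w.length
  refine ⟨⟨fun h => h _, fun h => ?_⟩, ⟨fun h => ?_, ?_⟩⟩
  · obtain ⟨d, hd, hdw⟩ := exists_branch_of_ERge_succ_ord hW.2.2 hw h
    exact of_branch d hd hdw
  · obtain ⟨d, hd, hdw⟩ := exists_branch_of_ERge_succ_ord hW.2.2 hw (h _)
    refine ⟨ULift ℕ, Set.univ, fun A => d.get (A.card - 1), Set.infinite_univ,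
      L.memK_of_forall_take_mem hW hd _, fun _ _ _ _ _ hcard => congrArg (fun k => d.get (k - 1)) hcard,
      fun A _ hA hAw => ?_⟩
    rw [← hdw]
    exact Stream'.getElem?_take (by have := hA.card_pos; omega)
  · rintro ⟨σ, M, c, hM, hK, hmono, hext⟩
    obtain ⟨d, hd, hdM⟩ := L.exists_branch_of_memK hW hM hK hmono
    refine of_branch d hd (Stream'.take_length_eq_of_forall_getElem? fun i hi => ?_)
    obtain ⟨A, hAM, hAcard⟩ := hM.exists_subset_card_eq (i + 1)
    have hA : A.Nonempty := by rw [← Finset.card_pos, hAcard]; omega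
    obtain rfl : i = A.card - 1 := by omega
    rw [hext A hAM hA (by omega), hdM A hAM hA]
end

section
/- Let L be a relational coloring language, W a set of allowed diagrams in L, and λ an infinite cardinal. Then K(W) has the disjoint amalgamation property for models of size λ if and only if for every special (λ,2)-system of W-colorings {c_1, c_2} (with underlying set X of size λ and points a_1, a_2 ∉ X) there is a W-coloring c of X ∪ {a_1, a_2} extending both c_1 and c_2. -/
universe u v

open Cardinal

/-!
Both directions reduce to amalgamating colorings inside one ambient type. For `→`, the disjoint
amalgam of `X ∪ {a₁}` and `X ∪ {a₂}` over `X` is pulled back to `X ∪ {a₁, a₂}` along the two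
embeddings, which glue to one injective map because their images meet only in the image of `X`.
For `←`, `M₁` and `M₂` are made disjoint off `M₀` inside `σ ⊕ σ`. Membership in `K(W)` is a
condition on finite subsets, so colorings extend along chains and Zorn's lemma reduces the
amalgamation to adding one point at a time. A point `p ∈ M₂` is added to a coloring of `S ⊇ M₁`
by a second transfinite induction, which grows `(S ∩ M₂) ∪ {p}` to `S ∪ {p}` one point `q` at a
time; each of these steps amalgamates a special `(λ,2)`-system with base of size `λ` and new
points `p` and `q`.
-/

theorem Cardinal.mk_eq_of_subset_of_subset {α : Type u} {A B C : Set α} {lam : Cardinal.{u}}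
    (hAB : A ⊆ B) (hBC : B ⊆ C) (hA : #A = lam) (hC : #C ≤ lam) : #B = lam :=
  le_antisymm ((mk_le_mk_of_subset hBC).trans hC) (hA ▸ mk_le_mk_of_subset hAB)

namespace ColoringLanguage

variable {L : ColoringLanguage.{u}} {W : Set (List L.Color)} {σ τ : Type u}

def AgreeOn {α : Type*} (M : Set σ) (c c' : Finset σ → α) : Prop :=
  ∀ A : Finset σ, ↑A ⊆ M → A.Nonempty → c A = c' A

section AgreeOn

variable {α : Type*} {M N : Set σ} {c c' c'' : Finset σ → α}

theorem AgreeOn.mono (h : AgreeOn M c c') (hNM : N ⊆ M) : AgreeOn N c c' :=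
  fun A hA => h A (hA.trans hNM)

theorem AgreeOn.symm (h : AgreeOn M c c') : AgreeOn M c' c :=
  fun A hA hne => (h A hA hne).symm

theorem AgreeOn.trans (h : AgreeOn M c c') (h' : AgreeOn M c' c'') : AgreeOn M c c'' :=
  fun A hA hne => (h A hA hne).trans (h' A hA hne)

end AgreeOn

section MemK

variable {M N : Set σ} {c c' : Finset σ → L.Color}

theorem Mono.congr {B : Set σ} (hm : L.Mono c B) (hc : AgreeOn B c c') : L.Mono c' B := by
  intro A₁ A₂ h₁ h₂ hne₁ hcard
  have hne₂ : A₂.Nonempty := by rw [← Finset.card_pos] at hne₁ ⊢; omega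
  rw [← hc A₁ h₁ hne₁, ← hc A₂ h₂ hne₂]
  exact hm A₁ A₂ h₁ h₂ hne₁ hcard

theorem DiagramOf.congr {B : Finset σ} {l : List L.Color} (hd : L.DiagramOf c B l)
    (hc : AgreeOn ↑B c c') : L.DiagramOf c' B l :=
  ⟨hd.1, fun A hA hne => hc A (Finset.coe_subset.2 hA) hne ▸ hd.2 A hA hne⟩

theorem MemK.mono (h : L.MemK W M c) (hNM : N ⊆ M) : L.MemK W N c :=
  ⟨fun A hA => h.1 A (hA.trans hNM), fun B hB => h.2 B (hB.trans hNM)⟩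

theorem MemK.congr (h : L.MemK W M c) (hc : AgreeOn M c c') : L.MemK W M c' := by
  refine ⟨fun A hA hne => hc A hA hne ▸ h.1 A hA hne, fun B hB hne hm => ?_⟩
  have hcB : AgreeOn ↑B c c' := hc.mono hB
  obtain ⟨l, hl, hd⟩ := h.2 B hB hne (hm.congr hcB.symm)
  exact ⟨l, hl, hd.congr hcB⟩

theorem memK_of_forall_finset (h : ∀ B : Finset σ, ↑B ⊆ M → L.MemK W ↑B c) : L.MemK W M c :=
  ⟨fun A hA => (h A hA).1 A subset_rfl, fun B hB => (h B hB).2 B subset_rfl⟩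

theorem MemK.comap [DecidableEq τ] {N : Set τ} {c : Finset τ → L.Color} {g : σ → τ}
    (h : L.MemK W N c) (hg : Set.InjOn g M) (hgM : Set.MapsTo g M N) :
    L.MemK W M (fun A => c (A.image g)) := by
  have hcard : ∀ A : Finset σ, ↑A ⊆ M → (A.image g).card = A.card :=
    fun A hA => Finset.card_image_of_injOn (hg.mono hA)
  have hsub : ∀ A : Finset σ, ↑A ⊆ M → ↑(A.image g) ⊆ N := fun A hA => by
    rw [Finset.coe_image]; exact (Set.image_mono hA).trans hgM.image_subset
  refine ⟨fun A hA hne => (hcard A hA) ▸ h.1 _ (hsub A hA) (hne.image g),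
    fun B hB hne hm => ?_⟩
  have hm' : L.Mono c ↑(B.image g) := by
    intro A₁ A₂ h₁ h₂ hne₁ hcard₁₂
    obtain ⟨B₁, hB₁, rfl⟩ := Finset.subset_image_iff.1 (Finset.coe_subset.1 h₁)
    obtain ⟨B₂, hB₂, rfl⟩ := Finset.subset_image_iff.1 (Finset.coe_subset.1 h₂)
    have hB₁M : ↑B₁ ⊆ M := (Finset.coe_subset.2 hB₁).trans hB
    have hB₂M : ↑B₂ ⊆ M := (Finset.coe_subset.2 hB₂).trans hB
    rw [hcard B₁ hB₁M, hcard B₂ hB₂M] at hcard₁₂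
    exact hm B₁ B₂ (Finset.coe_subset.2 hB₁) (Finset.coe_subset.2 hB₂)
      (Finset.image_nonempty.1 hne₁) hcard₁₂
  obtain ⟨l, hl, hlen, hdiag⟩ := h.2 _ (hsub B hB) (hne.image g) hm'
  refine ⟨l, hl, hlen.trans (hcard B hB), fun A hA hne => ?_⟩
  have := hdiag (A.image g) (Finset.image_subset_image hA) (hne.image g)
  rwa [hcard A ((Finset.coe_subset.2 hA).trans hB)] at this

theorem MemK.image [DecidableEq σ] {f : σ → τ} {g : τ → σ} (h : L.MemK W M c)
    (hgf : Set.LeftInvOn g f M) : L.MemK W (f '' M) (fun B => c (B.image g)) :=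
  h.comap hgf.rightInvOn_image.injOn (Set.mapsTo_iff_image_subset.2 hgf.image_image.subset)

theorem Emb.of_leftInvOn [DecidableEq σ] {f : σ → τ} {g : τ → σ} {N : Set τ}
    {d : Finset τ → L.Color} (hgf : Set.LeftInvOn g f M) (hN : f '' M ⊆ N)
    (hd : AgreeOn (f '' M) d (fun B => c (B.image g))) : L.Emb f M c N d := by
  classical
  refine ⟨hgf.injOn, hN, fun A hA hne => ?_⟩
  have hAf : ↑(A.image f) ⊆ f '' M := by rw [Finset.coe_image]; exact Set.image_mono hA
  rw [hd _ hAf (hne.image f)]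
  show c ((A.image f).image g) = c A
  congr 1
  apply Finset.coe_injective
  push_cast
  exact hgf.image_image' hA

end MemK

section Zorn

variable {P Q : Set τ} {c₁ c₂ : Finset τ → L.Color}

structure PartialAmalgam (W : Set (List L.Color)) (P Q : Set τ) (c₁ c₂ : Finset τ → L.Color) :
    Type u where
  S : Set τ
  d : Finset τ → L.Color
  left_subset : P ⊆ S
  subset_union : S ⊆ P ∪ Q
  memK : L.MemK W S d
  agreeOn_left : AgreeOn P d c₁
  agreeOn_right : AgreeOn (S ∩ Q) d c₂

instance : Preorder (PartialAmalgam W P Q c₁ c₂) where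
  le p q := p.S ⊆ q.S ∧ AgreeOn p.S q.d p.d
  le_refl p := ⟨subset_rfl, fun _ _ _ => rfl⟩
  le_trans p q r hpq hqr := ⟨hpq.1.trans hqr.1, (hqr.2.mono hpq.1).trans hpq.2⟩

theorem PartialAmalgam.bddAbove_of_isChain {C : Set (PartialAmalgam W P Q c₁ c₂)}
    (hC : IsChain (· ≤ ·) C) (hne : C.Nonempty) : BddAbove C := by
  classical
  have cover : ∀ A : Finset τ, ↑A ⊆ ⋃ p ∈ C, p.S → ∃ p ∈ C, ↑A ⊆ p.S := fun A hA =>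
    (hC.directedOn.mono fun _ _ h => h.1).exists_mem_subset_of_finset_subset_biUnion hne hA
  let d : Finset τ → L.Color := fun A =>
    if h : ∃ p ∈ C, ↑A ⊆ p.S then h.choose.d A else c₁ A
  have hd : ∀ p ∈ C, AgreeOn p.S d p.d := by
    intro p hp A hA hne
    have hex : ∃ q ∈ C, ↑A ⊆ q.S := ⟨p, hp, hA⟩
    obtain ⟨hq, hAq⟩ := hex.choose_spec
    simp only [d, dif_pos hex]
    rcases hC.total hq hp with hle | hle
    · exact (hle.2 A hAq hne).symm
    · exact hle.2 A hA hne
  obtain ⟨p₀, hp₀⟩ := hne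
  refine ⟨⟨⋃ p ∈ C, p.S, d, p₀.left_subset.trans (Set.subset_biUnion_of_mem hp₀),
    Set.iUnion₂_subset fun p _ => p.subset_union, memK_of_forall_finset fun B hB => ?_,
    ((hd p₀ hp₀).mono p₀.left_subset).trans p₀.agreeOn_left, fun A hA hne => ?_⟩,
    fun p hp => ⟨Set.subset_biUnion_of_mem hp, hd p hp⟩⟩
  · obtain ⟨p, hp, hBp⟩ := cover B hB
    exact (p.memK.mono hBp).congr ((hd p hp).mono hBp).symm
  · obtain ⟨p, hp, hAp⟩ := cover A (hA.trans Set.inter_subset_left)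
    exact (hd p hp A hAp hne).trans
      (p.agreeOn_right A (Set.subset_inter hAp (hA.trans Set.inter_subset_right)) hne)

theorem exists_amalgam_of_forall_extend (h₁ : L.MemK W P c₁) (h₁₂ : AgreeOn (P ∩ Q) c₁ c₂)
    (extend : ∀ (S : Set τ) (d : Finset τ → L.Color), P ⊆ S → S ⊆ P ∪ Q → L.MemK W S d →
      AgreeOn (S ∩ Q) d c₂ → ∀ p ∈ Q, p ∉ S →
      ∃ d', L.MemK W (S ∪ {p}) d' ∧ AgreeOn S d' d ∧ AgreeOn ((S ∪ {p}) ∩ Q) d' c₂) :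
    ∃ c, L.MemK W (P ∪ Q) c ∧ AgreeOn P c c₁ ∧ AgreeOn Q c c₂ := by
  have : Nonempty (PartialAmalgam W P Q c₁ c₂) :=
    ⟨⟨P, c₁, subset_rfl, Set.subset_union_left, h₁, fun _ _ _ => rfl, h₁₂⟩⟩
  obtain ⟨m, hm⟩ := zorn_le_nonempty (α := PartialAmalgam W P Q c₁ c₂)
    fun _ hC hne => PartialAmalgam.bddAbove_of_isChain hC hne
  have hmS : m.S = P ∪ Q := by
    refine m.subset_union.antisymm fun p hp => ?_
    by_contra hpS
    have hpQ : p ∈ Q := hp.resolve_left fun hpP => hpS (m.left_subset hpP)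
    obtain ⟨d', hd', hagree, hright⟩ :=
      extend m.S m.d m.left_subset m.subset_union m.memK m.agreeOn_right p hpQ hpS
    let m' : PartialAmalgam W P Q c₁ c₂ :=
      ⟨m.S ∪ {p}, d', m.left_subset.trans Set.subset_union_left,
        Set.union_subset m.subset_union (Set.singleton_subset_iff.2 hp), hd',
        (hagree.mono m.left_subset).trans m.agreeOn_left, hright⟩
    exact hpS ((hm (show m ≤ m' from ⟨Set.subset_union_left, hagree⟩)).1 (Or.inr rfl))
  have hright := m.agreeOn_right
  rw [hmS, Set.union_inter_cancel_right] at hright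
  exact ⟨m.d, hmS ▸ m.memK, m.agreeOn_left, hright⟩

end Zorn

def AmalgamatesSpecialSystems (L : ColoringLanguage.{u}) (W : Set (List L.Color))
    (lam : Cardinal.{u}) (σ : Type u) : Prop :=
  ∀ (X : Set σ) (a₁ a₂ : σ) (c₁ c₂ : Finset σ → L.Color),
    a₁ ∉ X → a₂ ∉ X → a₁ ≠ a₂ → #X = lam →
    L.MemK W (X ∪ {a₁}) c₁ → L.MemK W (X ∪ {a₂}) c₂ → AgreeOn X c₁ c₂ →
    ∃ c, L.MemK W (X ∪ {a₁, a₂}) c ∧ AgreeOn (X ∪ {a₁}) c c₁ ∧ AgreeOn (X ∪ {a₂}) c c₂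

namespace AmalgamatesSpecialSystems

variable {lam : Cardinal.{u}}

theorem extend_point (hsys : L.AmalgamatesSpecialSystems W lam σ) {X Y : Set σ} {a : σ}
    {d e : Finset σ → L.Color} (haX : a ∉ X) (hYX : Y ⊆ X) (hY : #Y = lam) (hX : #X ≤ lam)
    (hd : L.MemK W X d) (he : L.MemK W (Y ∪ {a}) e) (hde : AgreeOn Y d e) :
    ∃ c, L.MemK W (X ∪ {a}) c ∧ AgreeOn X c d ∧ AgreeOn (Y ∪ {a}) c e := by
  have hYaX : (Y ∪ {a}) ∩ X ⊆ Y := by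
    rintro x ⟨hx | rfl, hxX⟩
    exacts [hx, absurd hxX haX]
  have hXa : X ∪ {a} ⊆ (Y ∪ {a}) ∪ X :=
    Set.union_subset Set.subset_union_right (Set.subset_union_right.trans Set.subset_union_left)
  refine (exists_amalgam_of_forall_extend he (hde.symm.mono hYaX)
    fun S dS hYS hSX hdS hdSd p hpX hpS => ?_).imp
      fun c ⟨hc, hce, hcd⟩ => ⟨hc.mono hXa, hcd, hce⟩
  -- `S = (S ∩ X) ∪ {a}`, so adding `p` to `S` is amalgamating a special system over `S ∩ X`
  have hSsub : S ⊆ (S ∩ X) ∪ {a} := by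
    intro x hx
    rcases hSX hx with (hxY | rfl) | hxX
    exacts [Or.inl ⟨hx, hYX hxY⟩, Or.inr rfl, Or.inl ⟨hx, hxX⟩]
  have hsubS : (S ∩ X) ∪ {a} ⊆ S :=
    Set.union_subset Set.inter_subset_left (Set.singleton_subset_iff.2 (hYS (Or.inr rfl)))
  obtain ⟨c, hc, hcS, hcd⟩ := hsys (S ∩ X) a p dS d (fun h => haX h.2) (fun h => hpS h.1)
    (ne_of_mem_of_not_mem hpX haX).symm
    (Cardinal.mk_eq_of_subset_of_subset (Set.subset_inter (Set.subset_union_left.trans hYS) hYX)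
      Set.inter_subset_right hY hX)
    (hdS.mono hsubS) (hd.mono (Set.union_subset Set.inter_subset_right
      (Set.singleton_subset_iff.2 hpX))) hdSd
  refine ⟨c, hc.mono ?_, hcS.mono hSsub, hcd.mono ?_⟩
  · rintro x (hx | rfl)
    · rcases hSsub hx with hx | rfl
      exacts [Or.inl hx, Or.inr (Or.inl rfl)]
    · exact Or.inr (Or.inr rfl)
  · rintro x ⟨hx | rfl, hxX⟩
    exacts [Or.inl ⟨hx, hxX⟩, Or.inr rfl]

theorem exists_amalgam (hsys : L.AmalgamatesSpecialSystems W lam σ) {P Q : Set σ}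
    {c₁ c₂ : Finset σ → L.Color} (hPQ : #(P ∩ Q : Set σ) = lam) (hPQ' : #(P ∪ Q : Set σ) ≤ lam)
    (h₁ : L.MemK W P c₁) (h₂ : L.MemK W Q c₂) (h₁₂ : AgreeOn (P ∩ Q) c₁ c₂) :
    ∃ c, L.MemK W (P ∪ Q) c ∧ AgreeOn P c c₁ ∧ AgreeOn Q c c₂ := by
  refine exists_amalgam_of_forall_extend h₁ h₁₂ fun S d hPS hSPQ hd hdc₂ p hpQ hpS => ?_
  obtain ⟨c, hc, hcd, hcc₂⟩ := hsys.extend_point hpS Set.inter_subset_left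
    (Cardinal.mk_eq_of_subset_of_subset (Set.inter_subset_inter_left Q hPS)
      (Set.inter_subset_left.trans hSPQ) hPQ hPQ')
    ((Cardinal.mk_le_mk_of_subset hSPQ).trans hPQ') hd
    (h₂.mono (Set.union_subset Set.inter_subset_right (Set.singleton_subset_iff.2 hpQ))) hdc₂
  refine ⟨c, hc, hcd, hcc₂.mono ?_⟩
  rw [Set.union_inter_distrib_right]
  exact Set.union_subset_union_right _ Set.inter_subset_left

end AmalgamatesSpecialSystems

variable {lam : Cardinal.{u}}

theorem HasDAPAt.amalgamatesSpecialSystems (hdap : L.HasDAPAt W lam) (hlam : ℵ₀ ≤ lam)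
    (σ : Type u) : L.AmalgamatesSpecialSystems W lam σ := by
  classical
  intro X a₁ a₂ c₁ c₂ ha₁ ha₂ ha₁₂ hX h₁ h₂ h₁₂
  have hcard : ∀ a ∉ X, #(X ∪ {a} : Set σ) = lam := fun a ha => by
    rw [Set.union_singleton, Cardinal.mk_insert ha, hX, Cardinal.add_one_eq hlam]
  obtain ⟨τ, N, cN, f₁, f₂, hN, hf₁, hf₂, hf₁₂, hdisj⟩ :=
    hdap σ X (X ∪ {a₁}) (X ∪ {a₂}) c₁ c₁ c₂ (h₁.mono Set.subset_union_left) h₁ h₂ hX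
      (hcard a₁ ha₁) (hcard a₂ ha₂) ⟨Set.subset_union_left, fun _ _ _ => rfl⟩
      ⟨Set.subset_union_left, h₁₂⟩
  let g := Function.update f₁ a₂ (f₂ a₂)
  have hg₁ : Set.EqOn g f₁ (X ∪ {a₁}) := by
    rintro x (hx | rfl)
    exacts [Function.update_of_ne (ne_of_mem_of_not_mem hx ha₂) _ _,
      Function.update_of_ne ha₁₂ _ _]
  have hg₂ : Set.EqOn g f₂ (X ∪ {a₂}) := by
    rintro x (hx | rfl)
    exacts [(Function.update_of_ne (ne_of_mem_of_not_mem hx ha₂) _ _).trans (hf₁₂ x hx),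
      Function.update_self _ _ _]
  have hfa₂ : f₂ a₂ ∉ f₁ '' (X ∪ {a₁}) := fun h => by
    obtain ⟨x, hx, hxa⟩ : f₂ a₂ ∈ f₁ '' X := hdisj ▸ ⟨h, a₂, Or.inr rfl, rfl⟩
    rw [hf₁₂ x hx] at hxa
    exact ha₂ (hf₂.1 (Or.inl hx) (Or.inr rfl) hxa ▸ hx)
  have hXa : X ∪ {a₁, a₂} = insert a₂ (X ∪ {a₁}) := by
    rw [Set.pair_comm, Set.union_insert]
  have hg : Set.InjOn g (X ∪ {a₁, a₂}) := by
    rw [hXa, Set.injOn_insert (by rintro (h | h); exacts [ha₂ h, ha₁₂ h.symm]), hg₁.image_eq]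
    exact ⟨hf₁.1.congr hg₁.symm, by simpa [g] using hfa₂⟩
  have hgN : Set.MapsTo g (X ∪ {a₁, a₂}) N := by
    rw [hXa]
    rintro x (rfl | hx)
    · exact hg₂ (Or.inr rfl) ▸ hf₂.2.1 ⟨x, Or.inr rfl, rfl⟩
    · exact hg₁ hx ▸ hf₁.2.1 ⟨x, hx, rfl⟩
  refine ⟨fun A => cN (A.image g), hN.comap hg hgN, fun A hA hne => ?_, fun A hA hne => ?_⟩
  · dsimp only
    rw [Finset.image_congr (hg₁.mono hA)]
    exact hf₁.2.2 A hA hne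
  · dsimp only
    rw [Finset.image_congr (hg₂.mono hA)]
    exact hf₂.2.2 A hA hne

theorem hasDAPAt_of_amalgamatesSpecialSystems (hlam : ℵ₀ ≤ lam)
    (hsys : ∀ σ : Type u, L.AmalgamatesSpecialSystems W lam σ) : L.HasDAPAt W lam := by
  classical
  intro σ M₀ M₁ M₂ c₀ c₁ c₂ h₀ h₁ h₂ hM₀ hM₁ hM₂ h₀₁ h₀₂
  let f₁ : σ → σ ⊕ σ := Sum.inl
  let f₂ : σ → σ ⊕ σ := fun x => if x ∈ M₀ then Sum.inl x else Sum.inr x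
  let g : σ ⊕ σ → σ := Sum.elim id id
  have hgf₁ : Function.LeftInverse g f₁ := fun _ => rfl
  have hgf₂ : Function.LeftInverse g f₂ := fun x => by
    by_cases hx : x ∈ M₀ <;> simp [f₂, g, hx]
  have hf₁₂ : Set.EqOn f₁ f₂ M₀ := fun x hx => by simp [f₁, f₂, hx]
  have hinter : f₁ '' M₁ ∩ f₂ '' M₂ = f₁ '' M₀ := by
    refine Set.Subset.antisymm ?_ (Set.subset_inter (Set.image_mono h₀₁.1)
      (hf₁₂.image_eq ▸ Set.image_mono h₀₂.1))
    rintro _ ⟨⟨x, -, rfl⟩, y, -, hyx⟩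
    by_cases hy : y ∈ M₀
    · simp only [f₂, f₁, hy, if_true, Sum.inl.injEq] at hyx
      exact ⟨x, hyx ▸ hy, rfl⟩
    · simp [f₂, f₁, hy] at hyx
  have hcard₀ : #(f₁ '' M₁ ∩ f₂ '' M₂ : Set (σ ⊕ σ)) = lam := by
    rw [hinter, Cardinal.mk_image_eq hgf₁.injective, hM₀]
  have hcard : #(f₁ '' M₁ ∪ f₂ '' M₂ : Set (σ ⊕ σ)) ≤ lam := by
    refine (Cardinal.mk_union_le _ _).trans ?_
    rw [Cardinal.mk_image_eq hgf₁.injective, Cardinal.mk_image_eq hgf₂.injective, hM₁, hM₂,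
      Cardinal.add_eq_self hlam]
  have hagree : AgreeOn (f₁ '' M₁ ∩ f₂ '' M₂) (fun B => c₁ (B.image g))
      (fun B => c₂ (B.image g)) := by
    rw [hinter]
    intro A hA hne
    have hAM₀ : ↑(A.image g) ⊆ M₀ := by
      rw [Finset.coe_image]
      exact (Set.image_mono hA).trans (hgf₁.leftInvOn M₀).image_image.subset
    exact (h₀₁.2 _ hAM₀ (hne.image g)).symm.trans (h₀₂.2 _ hAM₀ (hne.image g))
  obtain ⟨c, hc, hc₁, hc₂⟩ := (hsys (σ ⊕ σ)).exists_amalgam hcard₀ hcard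
    (h₁.image (hgf₁.leftInvOn M₁)) (h₂.image (hgf₂.leftInvOn M₂)) hagree
  exact ⟨σ ⊕ σ, _, c, f₁, f₂, hc,
    Emb.of_leftInvOn (hgf₁.leftInvOn M₁) Set.subset_union_left hc₁,
    Emb.of_leftInvOn (hgf₂.leftInvOn M₂) Set.subset_union_right hc₂, hf₁₂, hinter⟩

end ColoringLanguage

theorem stmt3_general (L : ColoringLanguage.{u}) (W : Set (List L.Color))
    (lam : Cardinal.{u}) (hlam : ℵ₀ ≤ lam) :
    L.HasDAPAt W lam ↔
      ∀ (σ : Type u) (X : Set σ) (a₁ a₂ : σ) (c₁ c₂ : Finset σ → L.Color),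
        a₁ ∉ X → a₂ ∉ X → a₁ ≠ a₂ → Cardinal.mk ↥X = lam →
        L.MemK W (X ∪ {a₁}) c₁ → L.MemK W (X ∪ {a₂}) c₂ →
        (∀ A : Finset σ, ↑A ⊆ X → A.Nonempty → c₁ A = c₂ A) →
        ∃ c : Finset σ → L.Color,
          L.MemK W (X ∪ {a₁, a₂}) c ∧
          (∀ A : Finset σ, ↑A ⊆ X ∪ {a₁} → A.Nonempty → c A = c₁ A) ∧
          (∀ A : Finset σ, ↑A ⊆ X ∪ {a₂} → A.Nonempty → c A = c₂ A) :=
  ⟨fun hdap => hdap.amalgamatesSpecialSystems hlam,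
    ColoringLanguage.hasDAPAt_of_amalgamatesSpecialSystems hlam⟩

/-- `K(W)` has DAP for models of size `lam` iff every special
`(lam,2)`-system of `W`-colorings has a common `W`-coloring extension. -/
theorem stmt3 (L : ColoringLanguage.{u}) (W : Set (List L.Color))
    (hW : L.IsAllowed W) (lam : Cardinal.{u}) (hlam : ℵ₀ ≤ lam) :
    L.HasDAPAt W lam ↔
      ∀ (σ : Type u) (X : Set σ) (a₁ a₂ : σ) (c₁ c₂ : Finset σ → L.Color),
        a₁ ∉ X → a₂ ∉ X → a₁ ≠ a₂ → Cardinal.mk ↥X = lam →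
        L.MemK W (X ∪ {a₁}) c₁ → L.MemK W (X ∪ {a₂}) c₂ →
        (∀ A : Finset σ, ↑A ⊆ X → A.Nonempty → c₁ A = c₂ A) →
        ∃ c : Finset σ → L.Color,
          L.MemK W (X ∪ {a₁, a₂}) c ∧
          (∀ A : Finset σ, ↑A ⊆ X ∪ {a₁} → A.Nonempty → c A = c₁ A) ∧
          (∀ A : Finset σ, ↑A ⊆ X ∪ {a₂} → A.Nonempty → c A = c₂ A) :=
  stmt3_general L W lam hlam
end

section
/- Let W be a set of allowed diagrams in a relational coloring language L, and suppose ER(∅; W) = α + k where α is a limit ordinal and k < ω. Then there is w̄ ∈ W^k such that ER(w̄; W) = α. Moreover, there is a family of pairwise disjoint sets {S_i ⊆ (W_{{w̄}})^{k+1} : i < cf(α)} such that ER(∅; W_{S_i}) = α + k for every i < cf(α). -/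
universe u v

open Cardinal

/-!
Descending from the empty diagram, a diagram of rank `β + 1` always has a one-step extension of
rank exactly `β`, so `k` steps reach `w̄` of rank `α`. The one-step extensions of `w̄` all have rank
below `α`, and their ranks are cofinal in `α`. A well-order of cofinality `κ ≥ ℵ₀` splits into `κ`
pairwise disjoint cofinal pieces (take a cofinal subset of order type `κ.ord` and use
`κ × κ ≃ κ`); pulling such a splitting of the ranks back to the extensions gives the `S i`.
In `W_{S i}` the diagrams of length at most `k` are exactly the prefixes of `w̄`, so there the
rank of `∅` is the rank of `w̄` plus `k`, and `w̄` keeps rank `α` since `S i` reaches every rank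
below `α`.
-/

universe w

open Order Set Function
open scoped Ordinal

theorem exists_pairwise_disjoint_isCofinal_of_ord_mk_eq {X : Type*} [LinearOrder X]
    [WellFoundedLT X] (hX : ℵ₀ ≤ #X) (hord : (#X).ord = typeLT X) :
    ∃ P : X → Set X, Pairwise (Disjoint on P) ∧ ∀ i, IsCofinal (P i) := by
  obtain ⟨e⟩ : Nonempty (X × X ≃ X) := by
    rw [← Cardinal.eq, mk_prod, lift_id, mul_eq_self hX]
  refine ⟨fun i ↦ range fun j ↦ e (i, j), fun i i' hii' ↦ ?_, fun i ↦ ?_⟩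
  · rw [onFun, disjoint_range_iff]
    intro j j' h
    exact hii' (congrArg Prod.fst (e.injective h))
  · by_contra hP
    obtain ⟨x, hx⟩ := not_isCofinal_iff.1 hP
    have hinj : Injective fun j ↦ e (i, j) := fun j j' h ↦
      congrArg Prod.snd (e.injective h)
    have : #X ≤ #(Iio x) := by
      rw [← mk_range_eq _ hinj]
      exact mk_le_mk_of_subset hx
    exact (mk_Iio_lt x hord).not_ge this

theorem IsCofinal.exists_pairwise_disjoint_isCofinal {X : Type v} [LinearOrder X]
    [WellFoundedLT X] {R : Set X} (hR : IsCofinal R) (hX : ℵ₀ ≤ cof X) (ι : Type w)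
    (hι : lift.{v} #ι = lift.{w} (cof X)) :
    ∃ P : ι → Set X, Pairwise (Disjoint on P) ∧ ∀ i, P i ⊆ R ∧ IsCofinal (P i) := by
  obtain ⟨t, htR, ht, htype⟩ := Ordinal.exists_ord_cof_eq_of_isCofinal hR
  have hmk : #t = cof X := by simpa using congrArg Ordinal.card htype
  obtain ⟨Q, hQdisj, hQ⟩ := exists_pairwise_disjoint_isCofinal_of_ord_mk_eq (hmk ▸ hX)
    (by rw [hmk, htype])
  obtain ⟨e⟩ : Nonempty (ι ≃ t) := lift_mk_eq'.1 (by rw [hι, hmk])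
  refine ⟨fun i ↦ Subtype.val '' Q (e i), fun i i' hii' ↦ ?_, fun i ↦ ⟨?_, ht.trans (hQ _)⟩⟩
  · exact (disjoint_image_iff Subtype.val_injective).2 (hQdisj (e.injective.ne hii'))
  · exact (image_subset_range _ _).trans (by simpa using htR)

theorem Ordinal.exists_pairwise_disjoint_unbounded {α : Ordinal.{u}} (hα : IsSuccLimit α)
    {Y : Type*} (E : Set Y) (ρ : Y → Ordinal.{u}) (hlt : ∀ y ∈ E, ρ y < α)
    (hcof : ∀ δ < α, ∃ y ∈ E, δ ≤ ρ y) :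
    ∃ (ι : Type u) (S : ι → Set Y), #ι = α.cof ∧ Pairwise (Disjoint on S) ∧
      ∀ i, S i ⊆ E ∧ ∀ δ < α, ∃ y ∈ S i, δ ≤ ρ y := by
  have hR : IsCofinal {x : Iio α | ∃ y ∈ E, ρ y = x.1} := fun x ↦
    let ⟨y, hy, hxy⟩ := hcof x.1 x.2
    ⟨⟨ρ y, hlt y hy⟩, ⟨y, hy, rfl⟩, hxy⟩
  have hX : ℵ₀ ≤ Order.cof (Iio α) := by
    rw [Ordinal.cof_Iio, ← Ordinal.lift_cof, aleph0_le_lift, Ordinal.aleph0_le_cof_iff]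
    exact Ordinal.one_lt_cof_iff.2 hα
  obtain ⟨P, hPdisj, hP⟩ := hR.exists_pairwise_disjoint_isCofinal hX α.cof.out (by simp)
  refine ⟨α.cof.out, fun i ↦ {y ∈ E | ∃ x ∈ P i, x.1 = ρ y}, mk_out _, fun i j hij ↦ ?_,
    fun i ↦ ⟨fun y hy ↦ hy.1, fun δ hδ ↦ ?_⟩⟩
  · rw [onFun, disjoint_left]
    rintro y ⟨-, x, hx, hxy⟩ ⟨-, x', hx', hx'y⟩
    obtain rfl : x = x' := Subtype.ext (hxy.trans hx'y.symm)
    exact disjoint_left.1 (hPdisj hij) hx hx'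
  · obtain ⟨x, hx, hδx⟩ := (hP i).2 ⟨δ, hδ⟩
    obtain ⟨y, hy, hyx⟩ := (hP i).1 hx
    exact ⟨y, ⟨hy, x, hx, hyx.symm⟩, hyx ▸ hδx⟩

section ExistenceRank

variable {C : Type v} {W W' : Set (List C)} {γ γ' : Ordinal.{u}} {l : List C}

theorem ERge_iff_s8 : ERge W γ l ↔ ∀ β < γ, ∃ l' ∈ W, l'.length = l.length + 1 ∧
    l'.take l.length = l ∧ ERge W β l' := by
  unfold ERge
  rw [WellFounded.fix_eq]

theorem ERge.mono_s8 (h : ERge W γ l) (hle : γ' ≤ γ) : ERge W γ' l :=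
  ERge_iff_s8.2 fun β hβ ↦ ERge_iff_s8.1 h β (hβ.trans_le hle)

theorem ERge_add_one_iff : ERge W (γ + 1) l ↔ ∃ l' ∈ W, l'.length = l.length + 1 ∧
    l'.take l.length = l ∧ ERge W γ l' := by
  refine ⟨fun h ↦ ERge_iff_s8.1 h γ (lt_add_one γ), ?_⟩
  rintro ⟨l', hl', hlen, htake, h⟩
  exact ERge_iff_s8.2 fun β hβ ↦ ⟨l', hl', hlen, htake, h.mono_s8 (lt_add_one_iff.1 hβ)⟩

theorem ERge.of_subset (hWW' : W ⊆ W') (h : ERge W γ l) : ERge W' γ l := by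
  induction γ using WellFoundedLT.induction generalizing l with
  | ind γ ih =>
    refine ERge_iff_s8.2 fun β hβ ↦ ?_
    obtain ⟨l', hl', hlen, htake, h'⟩ := ERge_iff_s8.1 h β hβ
    exact ⟨l', hWW' hl', hlen, htake, ih β hβ h'⟩

/-- `ER(l;W) = γ`. -/
def HasExistenceRank (W : Set (List C)) (γ : Ordinal.{u}) (l : List C) : Prop :=
  ERge W γ l ∧ ¬ ERge W (γ + 1) l

/-- `ER(l;W)`, with the junk value `0` when `ERge W γ l` holds for every `γ`. -/
noncomputable def existenceRank (W : Set (List C)) (l : List C) : Ordinal.{u} :=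
  sInf {γ | ¬ ERge W (γ + 1) l}

theorem ERge_iff_le_existenceRank {γ₀ : Ordinal.{u}} (h : ¬ ERge W γ₀ l) :
    ERge W γ l ↔ γ ≤ existenceRank W l := by
  have hfail : ¬ ERge W (existenceRank W l + 1) l :=
    csInf_mem (s := {γ | ¬ ERge W (γ + 1) l}) ⟨γ₀, fun h' ↦ h (h'.mono_s8 (lt_add_one γ₀).le)⟩
  have hrank : ERge W (existenceRank W l) l := ERge_iff_s8.2 fun β hβ ↦ by
    refine ERge_add_one_iff.1 (not_not.1 fun hβ' ↦ ?_)
    exact (csInf_le' (s := {γ | ¬ ERge W (γ + 1) l}) hβ').not_gt hβ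
  refine ⟨fun hγ ↦ not_lt.1 fun hlt ↦ hfail (hγ.mono_s8 (add_one_le_iff.2 hlt)), hrank.mono_s8⟩

theorem existenceRank_lt {γ₀ : Ordinal.{u}} (h : ¬ ERge W γ₀ l) : existenceRank W l < γ₀ :=
  lt_of_not_ge fun hle ↦ h ((ERge_iff_le_existenceRank h).2 hle)

theorem HasExistenceRank.exists_extension (h : HasExistenceRank W (γ + 1) l) :
    ∃ l' ∈ W, l'.length = l.length + 1 ∧ HasExistenceRank W γ l' := by
  by_contra! hcon
  obtain ⟨l', hl', hlen, htake, h'⟩ := ERge_add_one_iff.1 h.1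
  refine h.2 (ERge_add_one_iff.2 ⟨l', hl', hlen, htake, ?_⟩)
  exact not_not.1 fun h'' ↦ hcon l' hl' hlen ⟨h', h''⟩

theorem HasExistenceRank.exists_of_add_natCast (k : ℕ) (hl : l ∈ W)
    (h : HasExistenceRank W (γ + k) l) :
    ∃ w ∈ W, w.length = l.length + k ∧ HasExistenceRank W γ w := by
  induction k generalizing l with
  | zero => exact ⟨l, hl, rfl, by simpa using h⟩
  | succ k ih =>
    rw [Nat.cast_succ, ← add_assoc] at h
    obtain ⟨l', hl', hlen, h'⟩ := h.exists_extension
    obtain ⟨w, hw, hwlen, hw'⟩ := ih hl' h'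
    exact ⟨w, hw, by omega, hw'⟩

end ExistenceRank

section Pruning

variable {C : Type v} {W S V : Set (List C)}

theorem ERge_prunedW_of_prefix {a l : List C} (ha : a ∈ S) (hal : a <+: l) {γ : Ordinal.{u}}
    (h : ERge W γ l) : ERge (prunedW W S) γ l := by
  induction γ using WellFoundedLT.induction generalizing l with
  | ind γ ih =>
    refine ERge_iff_s8.2 fun β hβ ↦ ?_
    obtain ⟨l', hl', hlen, htake, h'⟩ := ERge_iff_s8.1 h β hβ
    have hal' : a <+: l' := hal.trans (htake ▸ List.take_prefix l.length l')
    exact ⟨l', ⟨hl', a, ha, Or.inr hal'⟩, hlen, htake, ih β hβ hal' h'⟩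

theorem ERge_add_take_iff {w : List C} (hmem : ∀ m, w.take m ∈ V)
    (hpath : ∀ v ∈ V, v.length ≤ w.length → v <+: w) (γ : Ordinal.{u}) {d : ℕ}
    (hd : d ≤ w.length) : ERge V (γ + d) (w.take (w.length - d)) ↔ ERge V γ w := by
  induction d with
  | zero => simp
  | succ d ih =>
    rw [← ih (by omega), Nat.cast_succ, ← add_assoc, ERge_add_one_iff]
    have hlen : (w.take (w.length - (d + 1))).length = w.length - (d + 1) := by
      simp only [List.length_take]; omega
    constructor
    · rintro ⟨l', hl', hl'len, -, h⟩
      rw [hlen] at hl'len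
      have hl'w := List.prefix_iff_eq_take.1 (hpath l' hl' (by omega))
      rwa [hl'w, hl'len, show w.length - (d + 1) + 1 = w.length - d by omega] at h
    · intro h
      refine ⟨w.take (w.length - d), hmem _, ?_, ?_, h⟩
      · simp only [List.length_take]; omega
      · rw [hlen, List.take_take]; congr 1; omega

theorem prefix_of_mem_prunedW {wb v : List C}
    (hS : ∀ u ∈ S, u.length = wb.length + 1 ∧ u.take wb.length = wb)
    (hv : v ∈ prunedW W S) (hlen : v.length ≤ wb.length) : v <+: wb := by
  obtain ⟨-, u, hu, hvu | huv⟩ := hv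
  · rw [← (hS u hu).2]
    exact List.prefix_take_iff.2 ⟨hvu, hlen⟩
  · have := (hS u hu).1
    have := huv.length_le
    omega

theorem ERge_prunedW_nil_iff (hW : ∀ l ∈ W, ∀ m : ℕ, l.take m ∈ W) {wb : List C}
    (hS : ∀ u ∈ S, u ∈ W ∧ u.length = wb.length + 1 ∧ u.take wb.length = wb)
    (hSne : S.Nonempty) (γ : Ordinal.{u}) :
    ERge (prunedW W S) (γ + wb.length) [] ↔ ERge (prunedW W S) γ wb := by
  obtain ⟨u₀, hu₀⟩ := hSne
  obtain ⟨hu₀W, -, hu₀wb⟩ := hS u₀ hu₀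
  have hmem : ∀ m, wb.take m ∈ prunedW W S := fun m ↦ by
    refine ⟨?_, u₀, hu₀, Or.inl ((List.take_prefix m wb).trans ?_)⟩
    · rw [← hu₀wb, List.take_take]
      exact hW u₀ hu₀W _
    · exact hu₀wb ▸ List.take_prefix _ u₀
  simpa using ERge_add_take_iff hmem
    (fun v hv ↦ prefix_of_mem_prunedW (fun u hu ↦ (hS u hu).2) hv) γ le_rfl

theorem HasExistenceRank.prunedW_nil (hW : ∀ l ∈ W, ∀ m : ℕ, l.take m ∈ W) {wb : List C}
    {α : Ordinal.{u}} (hwb : ¬ ERge W (α + 1) wb)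
    (hS : ∀ u ∈ S, u ∈ W ∧ u.length = wb.length + 1 ∧ u.take wb.length = wb)
    (hSne : S.Nonempty) (hcof : ∀ δ < α, ∃ u ∈ S, ERge W δ u) :
    HasExistenceRank (prunedW W S) (α + wb.length) [] := by
  have hwb' : ERge (prunedW W S) α wb := ERge_iff_s8.2 fun β hβ ↦ by
    obtain ⟨u, hu, h⟩ := hcof β hβ
    exact ⟨u, ⟨(hS u hu).1, u, hu, Or.inl List.prefix_rfl⟩, (hS u hu).2.1, (hS u hu).2.2,
      ERge_prunedW_of_prefix hu List.prefix_rfl h⟩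
  refine ⟨(ERge_prunedW_nil_iff hW hS hSne α).2 hwb', fun h ↦ hwb ?_⟩
  rw [add_assoc, ← Nat.cast_add_one, add_comm wb.length, Nat.cast_add, Nat.cast_one,
    ← add_assoc, ERge_prunedW_nil_iff hW hS hSne] at h
  exact h.of_subset (sep_subset _ _)

end Pruning

/-- if `ER(∅;W) = α + k` with `α` limit and `k < ω`, then there is
`w̄ ∈ W^k` with `ER(w̄;W) = α` and pairwise disjoint sets
`S_i ⊆ (W_{{w̄}})^{k+1}` (`i < cf(α)`) with `ER(∅; W_{S_i}) = α + k`. -/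
theorem stmt8 (L : ColoringLanguage.{u}) (W : Set (List L.Color))
    (hW : L.IsAllowed W) (α : Ordinal.{u}) (hα : Order.IsSuccLimit α) (k : ℕ)
    (hER : ERge W (α + (k : Ordinal.{u})) ([] : List L.Color) ∧
      ¬ ERge W (α + (k : Ordinal.{u}) + 1) ([] : List L.Color)) :
    ∃ wb ∈ W, wb.length = k ∧ (ERge W α wb ∧ ¬ ERge W (α + 1) wb) ∧
      ∃ (ι : Type u) (S : ι → Set (List L.Color)),
        Cardinal.mk ι = α.cof ∧
        (∀ i j : ι, i ≠ j → Disjoint (S i) (S j)) ∧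
        ∀ i : ι, S i ⊆ {l ∈ prunedW W {wb} | l.length = k + 1} ∧
          ERge (prunedW W (S i)) (α + (k : Ordinal.{u})) ([] : List L.Color) ∧
          ¬ ERge (prunedW W (S i)) (α + (k : Ordinal.{u}) + 1) ([] : List L.Color) := by
  obtain ⟨⟨l₀, hl₀⟩, -, hclosed⟩ := hW
  have hnil : [] ∈ W := by simpa using hclosed l₀ hl₀ 0
  obtain ⟨wb, hwbW, hwblen, hwb⟩ := HasExistenceRank.exists_of_add_natCast k hnil hER
  rw [List.length_nil, zero_add] at hwblen
  subst hwblen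
  set E := {u ∈ W | u.length = wb.length + 1 ∧ u.take wb.length = wb}
  have hE : ∀ u ∈ E, ¬ ERge W α u := fun u hu h ↦
    hwb.2 (ERge_add_one_iff.2 ⟨u, hu.1, hu.2.1, hu.2.2, h⟩)
  obtain ⟨ι, S, hι, hdisj, hS⟩ := Ordinal.exists_pairwise_disjoint_unbounded hα E
    (existenceRank W) (fun u hu ↦ existenceRank_lt (hE u hu)) fun δ hδ ↦ by
      obtain ⟨u, hu, hulen, hutake, h⟩ := ERge_iff_s8.1 hwb.1 δ hδ
      have huE : u ∈ E := ⟨hu, hulen, hutake⟩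
      exact ⟨u, huE, (ERge_iff_le_existenceRank (hE u huE)).1 h⟩
  refine ⟨wb, hwbW, rfl, hwb, ι, S, hι, fun i j ↦ @hdisj i j, fun i ↦ ⟨?_, ?_⟩⟩
  · intro u hu
    obtain ⟨huW, hulen, hutake⟩ := (hS i).1 hu
    exact ⟨⟨huW, wb, rfl, Or.inr (hutake ▸ List.take_prefix _ u)⟩, hulen⟩
  · have hcof : ∀ δ < α, ∃ u ∈ S i, ERge W δ u := fun δ hδ ↦ by
      obtain ⟨u, hu, hδu⟩ := (hS i).2 δ hδ
      exact ⟨u, hu, (ERge_iff_le_existenceRank (hE u ((hS i).1 hu))).2 hδu⟩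
    obtain ⟨u₀, hu₀, -⟩ := hcof 0 hα.pos
    exact HasExistenceRank.prunedW_nil hclosed hwb.2 (fun u hu ↦ (hS i).1 hu) ⟨u₀, hu₀⟩ hcof
end

section
/- Let W be a set of allowed diagrams in a relational coloring language L, and suppose that for some λ ≥ ℶ_{|L|⁺}(|L|) the class K(W) has a model of cardinality λ. Then (1) for every infinite cardinal μ, K(W) has a model of cardinality μ, and (2) K(W) has no maximal models: every (M,c) ∈ K(W) is a proper substructure of some (N,c') ∈ K(W). -/
/-!
Let `κ = |L|`, which is infinite since there are colors of every arity. Say that a diagram `l`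
has rank `≥ γ` in `(M, c)` if some subset of `M` of size `ℶ_{ωγ+|l|}(κ)` colors all its subsets
of size `≤ |l|` as `l` prescribes. As `|M| ≥ ℶ_{κ⁺}(κ)`, the empty diagram has rank `≥ γ` for
every `γ < κ⁺`. By the Erdős–Rado theorem `ℶ_n(μ)⁺ → (μ⁺)^{n+1}_μ`, rank `≥ γ + 1` of `l` gives
rank `≥ γ` of a one-color extension `l ++ [r]`; as `κ⁺` is regular and there are only `κ` colors,
one `r` serves all `γ < κ⁺`. Iterating yields an infinite branch `w` of `W`, whose finite segments
are diagrams of monochromatic subsets of `M` and hence lie in `W`. Coloring every `k`-set by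
`w (k - 1)` gives models of every size, and adjoining a point whose sets are colored by `w`
properly extends any model.
-/

universe u v

open Cardinal

open Cardinal Set

section Beth

variable (κ : Cardinal.{u})

lemma bethF_zero : bethF κ 0 = κ := Ordinal.limitRecOn_zero ..

lemma bethF_add_one (o : Ordinal.{u}) : bethF κ (o + 1) = 2 ^ bethF κ o :=
  Ordinal.limitRecOn_add_one ..

lemma bethF_of_isSuccLimit {o : Ordinal.{u}} (h : Order.IsSuccLimit o) :
    bethF κ o = ⨆ b : Iio o, bethF κ b.1 :=
  Ordinal.limitRecOn_limit _ _ _ _ h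

lemma bethF_mono : Monotone (bethF κ) := by
  intro o₁ o₂ h
  induction o₂ using Ordinal.limitRecOn generalizing o₁ with
  | zero => rw [nonpos_iff_eq_zero.mp h]
  | add_one o ih =>
    rcases h.eq_or_lt with rfl | h
    · rfl
    · exact (ih (Order.lt_add_one_iff.mp h)).trans (bethF_add_one κ o ▸ (cantor _).le)
  | limit o hlim _ =>
    rcases h.eq_or_lt with rfl | h
    · rfl
    · rw [bethF_of_isSuccLimit κ hlim]
      exact le_ciSup bddAbove_of_small (⟨o₁, h⟩ : Iio o)

lemma bethF_strictMono : StrictMono (bethF κ) := fun _ _ h =>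
  (cantor _).trans_le ((bethF_add_one κ _).symm.trans_le (bethF_mono κ (Order.add_one_le_of_lt h)))

lemma le_bethF (o : Ordinal.{u}) : κ ≤ bethF κ o :=
  (bethF_zero κ).ge.trans (bethF_mono κ zero_le)

lemma bethF_bethF_natCast (δ : Ordinal.{u}) (n : ℕ) :
    bethF (bethF κ δ) n = bethF κ (δ + n) := by
  induction n with
  | zero => simp [bethF_zero]
  | succ n ih => rw [Nat.cast_succ, bethF_add_one, ih, ← bethF_add_one, add_assoc]

end Beth

lemma mk_finset_le_max (α : Type u) : #(Finset α) ≤ max #α ℵ₀ := by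
  cases finite_or_infinite α
  · exact mk_le_aleph0.trans (le_max_right _ _)
  · exact (mk_finset_of_infinite α).le.trans (le_max_left _ _)

lemma mk_iUnion_le_of_le {α ι : Type u} {c : Cardinal.{u}} (hc : ℵ₀ ≤ c) {f : ι → Set α}
    (hι : #ι ≤ c) (hf : ∀ i, #(f i) ≤ c) : #(⋃ i, f i) ≤ c :=
  (mk_iUnion_le f).trans ((mul_le_mul' hι (ciSup_le' hf)).trans (mul_eq_self hc).le)

lemma mk_Iio_toType_succ_ord_le {ν : Cardinal.{u}} (ξ : (Order.succ ν).ord.ToType) :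
    #(Iio ξ) ≤ ν :=
  Order.lt_succ_iff.mp (by simpa using mk_Iio_lt ξ)

lemma exists_forall_lt_of_mk_le {ν : Cardinal.{u}} (hν : ℵ₀ ≤ ν)
    (s : Set (Order.succ ν).ord.ToType) (hs : #s ≤ ν) : ∃ ξ, ∀ η ∈ s, η < ξ := by
  refine not_isCofinal_iff.mp fun hcof => ?_
  have := (Order.cof_le hcof).trans hs
  rw [Ordinal.cof_toType, (isRegular_succ hν).cof_ord] at this
  exact (Order.lt_succ ν).not_ge this

lemma WellFoundedLT.exists_eq_image_Iio {ι α : Type*} [LinearOrder ι] [WellFoundedLT ι]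
    (next : Set α → α) : ∃ x : ι → α, ∀ ξ, x ξ = next (x '' Iio ξ) := by
  refine ⟨wellFounded_lt.fix fun ξ x => next (range fun η : Iio ξ => x η η.2), fun ξ => ?_⟩
  rw [WellFounded.fix_eq, image_eq_range]

section ErdosRado

variable {α K : Type u} {ν : Cardinal.{u}}

/-- The union of a chain of length `ν⁺` whose every level closes the earlier ones under `F`. -/
theorem exists_closed_of_mk_le (hν : ℵ₀ ≤ ν) (F : Set α → Set α)
    (hF : ∀ A : Set α, #A ≤ ν → #(F A) ≤ 2 ^ ν) :
    ∃ N : Set α, #N ≤ 2 ^ ν ∧ ∀ A ⊆ N, #A ≤ ν → F A ⊆ N := by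
  have h2ν : ℵ₀ ≤ 2 ^ ν := hν.trans (cantor ν).le
  let step (N : Set α) : Set α := ⋃ A : {B : Set α // B ⊆ N ∧ #B ≤ ν}, F A.1
  have mk_step (N : Set α) (hN : #N ≤ 2 ^ ν) : #(step N) ≤ 2 ^ ν := by
    refine mk_iUnion_le_of_le h2ν ((mk_bounded_subset_le N ν).trans ?_) fun A => hF A A.2.2
    calc max #N ℵ₀ ^ ν ≤ (2 ^ ν) ^ ν := power_le_power_right (max_le hN h2ν)
      _ = 2 ^ ν := by rw [← power_mul, mul_eq_self hν]
  obtain ⟨chain, hchain⟩ := WellFoundedLT.exists_eq_image_Iio (ι := (Order.succ ν).ord.ToType)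
    fun 𝒜 => step (⋃₀ 𝒜)
  have mk_chain (ξ) : #(chain ξ) ≤ 2 ^ ν := by
    induction ξ using WellFoundedLT.induction with
    | ind ξ ih =>
      rw [hchain, sUnion_image, biUnion_eq_iUnion]
      exact mk_step _ (mk_iUnion_le_of_le h2ν
        ((mk_Iio_toType_succ_ord_le ξ).trans (cantor ν).le) fun η => ih η η.2)
  refine ⟨⋃ ξ, chain ξ, mk_iUnion_le_of_le h2ν ?_ mk_chain, fun A hA hAν => ?_⟩
  · simpa using Order.succ_le_of_lt (cantor ν)
  · choose level hlevel using fun a : A => mem_iUnion.mp (hA a.2)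
    obtain ⟨ξ, hξ⟩ := exists_forall_lt_of_mk_le hν (range level) (mk_range_le.trans hAν)
    have hAξ : A ⊆ ⋃₀ (chain '' Iio ξ) := fun a ha =>
      ⟨_, mem_image_of_mem _ (hξ _ (mem_range_self ⟨a, ha⟩)), hlevel ⟨a, ha⟩⟩
    refine subset_iUnion_of_subset ξ ?_
    rw [hchain ξ]
    exact subset_iUnion_of_subset ⟨A, hAξ, hAν⟩ subset_rfl

theorem exists_realizing_set [DecidableEq α] [Nonempty α] (hν : ℵ₀ ≤ ν) (hK : #K ≤ ν)
    (d : Finset α → K) (Y : Set α) :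
    ∃ N : Set α, #N ≤ 2 ^ ν ∧ ∀ A ⊆ N, #A ≤ ν → ∀ y ∈ Y \ A, ∃ y' ∈ N, y' ∈ Y \ A ∧
      ∀ S : Finset α, ↑S ⊆ A → d (insert y' S) = d (insert y S) := by
  classical
  -- `tp A y` is the type of `y` over `A`; `N` is closed under picking one realization per type.
  let tp (A : Set α) (y : α) : Finset A → K := fun S => d (insert y (S.map (.subtype _)))
  have mk_types_le (A : Set α) (hA : #A ≤ ν) : #(Finset A → K) ≤ 2 ^ ν := by
    rw [← power_def, ← power_self_eq hν]
    exact (power_le_power_right hK).trans (power_le_power_left (aleph0_pos.trans_le hν).ne'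
      ((mk_finset_le_max A).trans (max_le hA hν)))
  obtain ⟨N, hN, hclosed⟩ := exists_closed_of_mk_le hν
    (fun A => Function.invFunOn (tp A) (Y \ A) '' (tp A '' (Y \ A)))
    fun A hA => mk_image_le.trans (mk_set_le _ |>.trans (mk_types_le A hA))
  refine ⟨N, hN, fun A hAN hA y hy => ?_⟩
  obtain ⟨hmem, htp⟩ := Function.invFunOn_pos (f := tp A) ⟨y, hy, rfl⟩
  refine ⟨_, hclosed A hAN hA (mem_image_of_mem _ (mem_image_of_mem _ hy)), hmem, fun S hS => ?_⟩
  simpa [tp, Finset.subtype_map_of_mem fun a ha => hS ha] using congrFun htp (S.subtype (· ∈ A))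

theorem exists_endHomogeneous [DecidableEq α] (hν : ℵ₀ ≤ ν) (hK : #K ≤ ν) (d : Finset α → K)
    (Y : Set α) (hY : Order.succ (2 ^ ν) ≤ #Y) :
    ∃ (x : (Order.succ ν).ord.ToType → α) (y : α), Function.Injective x ∧ range x ⊆ Y ∧
      ∀ ξ (S : Finset α), ↑S ⊆ x '' Iio ξ → d (insert (x ξ) S) = d (insert y S) := by
  have hY' : 2 ^ ν < #Y := (Order.lt_succ _).trans_le hY
  have : Nonempty α := (mk_ne_zero_iff.mp (zero_le.trans_lt hY').ne').map Subtype.val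
  obtain ⟨N, hN, hreal⟩ := exists_realizing_set hν hK d Y
  obtain ⟨y, hyY, hyN⟩ : ∃ y ∈ Y, y ∉ N :=
    not_subset.mp fun hYN => ((mk_le_mk_of_subset hYN).trans hN).not_gt hY'
  let IsWitness (A : Set α) (y' : α) : Prop :=
    y' ∈ N ∧ y' ∈ Y \ A ∧ ∀ S : Finset α, ↑S ⊆ A → d (insert y' S) = d (insert y S)
  classical
  obtain ⟨x, hx⟩ := WellFoundedLT.exists_eq_image_Iio (ι := (Order.succ ν).ord.ToType)
    fun A => if h : ∃ y', IsWitness A y' then h.choose else y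
  have hx_witness (ξ) : IsWitness (x '' Iio ξ) (x ξ) := by
    induction ξ using WellFoundedLT.induction with
    | ind ξ ih =>
      have hex : ∃ y', IsWitness (x '' Iio ξ) y' := by
        refine hreal _ ?_ (mk_image_le.trans (mk_Iio_toType_succ_ord_le ξ)) y
          ⟨hyY, fun hy => hyN ?_⟩
        · rintro _ ⟨η, hη, rfl⟩
          exact (ih η hη).1
        · obtain ⟨η, hη, rfl⟩ := hy
          exact (ih η hη).1
      rw [hx ξ, dif_pos hex]
      exact hex.choose_spec
  refine ⟨x, y, fun ξ η h => ?_, ?_, fun ξ => (hx_witness ξ).2.2⟩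
  · by_contra hne
    rcases lt_or_gt_of_ne hne with hlt | hlt
    · exact (hx_witness η).2.1.2 ⟨ξ, hlt, h⟩
    · exact (hx_witness ξ).2.1.2 ⟨η, hlt, h.symm⟩
  · rintro _ ⟨ξ, rfl⟩
    exact (hx_witness ξ).2.1.1

lemma Finset.exists_erase_subset_image_Iio {ι β : Type*} [LinearOrder ι] [DecidableEq β]
    (x : ι → β) {S : Finset β} (hS : ↑S ⊆ Set.range x) (hne : S.Nonempty) :
    ∃ ξ, x ξ ∈ S ∧ ↑(S.erase (x ξ)) ⊆ x '' Set.Iio ξ := by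
  have : Nonempty ι := ⟨(hS hne.choose_spec).choose⟩
  have hx (a : β) (ha : a ∈ S) : x (Function.invFun x a) = a := Function.invFun_eq (hS ha)
  obtain ⟨a, ha, hmax⟩ := S.exists_max_image (Function.invFun x) hne
  refine ⟨Function.invFun x a, (hx a ha).symm ▸ ha, fun b hb => ?_⟩
  obtain ⟨hba, hbS⟩ := Finset.mem_erase.mp hb
  refine ⟨Function.invFun x b, (hmax b hbS).lt_of_ne fun h => ?_, hx b hbS⟩
  rw [hx a ha] at hba
  exact hba (by rw [← hx b hbS, h, hx a ha])

/-- The Erdős–Rado theorem `ℶ_n(μ)⁺ → (μ⁺)^{n+1}_μ`. -/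
theorem exists_homogeneous_of_succ_bethF_le [DecidableEq α] {μ : Cardinal.{u}} (hμ : ℵ₀ ≤ μ)
    (hK : #K ≤ μ) (n : ℕ) (d : Finset α → K) (Y : Set α)
    (hY : Order.succ (bethF μ n) ≤ #Y) :
    ∃ r, ∃ Z ⊆ Y, Order.succ μ ≤ #Z ∧ ∀ S : Finset α, ↑S ⊆ Z → S.card = n + 1 → d S = r := by
  induction n generalizing d Y with
  | zero =>
    rw [Nat.cast_zero, bethF_zero] at hY
    obtain ⟨r, Z, hZY, hZ, hZr⟩ := infinite_pigeonhole_set (fun y : Y => d {y.1}) _ hY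
      (hμ.trans (Order.le_succ μ))
      (by rw [(isRegular_succ hμ).cof_ord]; exact hK.trans_lt (Order.lt_succ μ))
    refine ⟨r, Z, hZY, hZ, fun S hS hcard => ?_⟩
    obtain ⟨a, rfl⟩ := Finset.card_eq_one.mp hcard
    exact hZr (hS (Finset.mem_singleton_self a))
  | succ n ih =>
    rw [Nat.cast_succ, bethF_add_one] at hY
    obtain ⟨x, y, hx_inj, hxY, hx⟩ :=
      exists_endHomogeneous (hμ.trans (le_bethF μ n)) (hK.trans (le_bethF μ n)) d Y hY
    obtain ⟨r, Z, hZx, hZ, hZr⟩ := ih (fun S => d (insert y S)) (range x)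
      (by rw [mk_range_eq x hx_inj, mk_ord_toType])
    refine ⟨r, Z, hZx.trans hxY, hZ, fun S hSZ hcard => ?_⟩
    obtain ⟨ξ, hξS, hS'⟩ := Finset.exists_erase_subset_image_Iio x (hSZ.trans hZx)
      (Finset.card_pos.mp (by omega))
    calc d S = d (insert (x ξ) (S.erase (x ξ))) := by rw [Finset.insert_erase hξS]
      _ = d (insert y (S.erase (x ξ))) := hx ξ _ hS'
      _ = r := hZr _ ((Finset.coe_subset.mpr (S.erase_subset _)).trans hSZ)
          (by rw [Finset.card_erase_of_mem hξS, hcard]; rfl)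

end ErdosRado

section LevelDiagram

open Ordinal

variable {σ C : Type u}

lemma omega0_mul_add_natCast_lt {β γ : Ordinal.{u}} (h : β < γ) (m n : ℕ) :
    ω * β + m < ω * γ + n :=
  calc ω * β + m < ω * β + ω := add_lt_add_right (natCast_lt_omega0 m) _
    _ = ω * (β + 1) := (mul_add_one ω β).symm
    _ ≤ ω * γ := mul_le_mul_right (Order.add_one_le_of_lt h) ω
    _ ≤ ω * γ + n := le_self_add

def IsLevelDiagram (c : Finset σ → C) (Y : Set σ) (l : List C) : Prop :=
  ∀ A : Finset σ, ↑A ⊆ Y → A.Nonempty → A.card ≤ l.length → l[A.card - 1]? = some (c A)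

variable {c : Finset σ → C} {Y : Set σ} {l : List C}

lemma isLevelDiagram_nil : IsLevelDiagram c Y [] := fun _ _ hA hcard =>
  absurd (Finset.card_pos.mpr hA) (by simpa using hcard)

lemma IsLevelDiagram.exists_append (h : IsLevelDiagram c Y l) {μ : Cardinal.{u}} (hμ : ℵ₀ ≤ μ)
    (hC : #C ≤ μ) (hY : Order.succ (bethF μ l.length) ≤ #Y) :
    ∃ r, ∃ Z ⊆ Y, IsLevelDiagram c Z (l ++ [r]) ∧ Order.succ μ ≤ #Z := by
  classical
  obtain ⟨r, Z, hZY, hZ, hZr⟩ := exists_homogeneous_of_succ_bethF_le hμ hC l.length c Y hY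
  refine ⟨r, Z, hZY, fun A hAZ hA hcard => ?_, hZ⟩
  have hpos := Finset.card_pos.mpr hA
  rw [List.length_append, List.length_singleton] at hcard
  rcases hcard.lt_or_eq with hlt | heq
  · rw [List.getElem?_append_left (by omega)]
    exact h A (hAZ.trans hZY) hA (by omega)
  · rw [heq, Nat.add_sub_cancel, List.getElem?_concat_length, hZr A hAZ heq]

/-- A cardinality version of the existence rank `ER(l) ≥ γ`. -/
def HasLargeLevelSet (M : Set σ) (c : Finset σ → C) (γ : Ordinal.{u}) (l : List C) : Prop :=
  ∃ Y ⊆ M, IsLevelDiagram c Y l ∧ bethF #C (ω * γ + l.length) ≤ #Y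

variable {M : Set σ}

lemma HasLargeLevelSet.anti {β γ : Ordinal.{u}} (hβγ : β ≤ γ) (h : HasLargeLevelSet M c γ l) :
    HasLargeLevelSet M c β l :=
  let ⟨Y, hYM, hY, hsize⟩ := h
  ⟨Y, hYM, hY, (bethF_mono _ (add_le_add_left (mul_le_mul_right hβγ ω) _)).trans hsize⟩

lemma HasLargeLevelSet.exists_append (hC : ℵ₀ ≤ #C) {β γ : Ordinal.{u}} (hβγ : β < γ)
    (h : HasLargeLevelSet M c γ l) : ∃ r, HasLargeLevelSet M c β (l ++ [r]) := by
  obtain ⟨Y, hYM, hY, hsize⟩ := h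
  set μ := bethF #C (ω * β + (l.length + 1 : ℕ))
  have hμY : Order.succ (bethF μ l.length) ≤ #Y := by
    refine Order.succ_le_of_lt (lt_of_lt_of_le ?_ hsize)
    rw [bethF_bethF_natCast, add_assoc, ← Nat.cast_add]
    exact bethF_strictMono _ (omega0_mul_add_natCast_lt hβγ _ _)
  obtain ⟨r, Z, hZY, hZ, hZsize⟩ :=
    hY.exists_append (hC.trans (le_bethF _ _)) (le_bethF _ _) hμY
  refine ⟨r, Z, hZY.trans hYM, hZ, ?_⟩
  rw [List.length_append, List.length_singleton]
  exact (Order.le_succ μ).trans hZsize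

lemma exists_append_forall_hasLargeLevelSet (hC : ℵ₀ ≤ #C)
    (h : ∀ γ < (Order.succ #C).ord, HasLargeLevelSet M c γ l) :
    ∃ r, ∀ γ < (Order.succ #C).ord, HasLargeLevelSet M c γ (l ++ [r]) := by
  by_contra! hbad
  choose γ hγ hγ_bad using hbad
  have hsup : ⨆ r, γ r < (Order.succ #C).ord :=
    iSup_lt_of_lt_cof (by rw [(isRegular_succ hC).cof_ord]; exact Order.lt_succ _) hγ
  have hsup' := (isSuccLimit_ord (hC.trans (Order.le_succ _))).add_one_lt hsup
  obtain ⟨r, hr⟩ := (h _ hsup').exists_append hC (Order.lt_add_one_iff.mpr le_rfl)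
  exact hγ_bad r (hr.anti (le_ciSup Ordinal.bddAbove_of_small r))

end LevelDiagram

lemma List.exists_forall_map_range {C : Type*} (P : List C → Prop) (hnil : P [])
    (hstep : ∀ l, P l → ∃ r, P (l ++ [r])) : ∃ w : ℕ → C, ∀ n, P ((List.range n).map w) := by
  choose next hnext using hstep
  let prefixes : ℕ → {l // P l} := fun n => n.rec ⟨[], hnil⟩ fun _ l => ⟨_, hnext l.1 l.2⟩
  let w (n : ℕ) : C := next (prefixes n).1 (prefixes n).2
  have hprefixes (n : ℕ) : (prefixes n).1 = (List.range n).map w := by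
    induction n with
    | zero => rfl
    | succ n ih => rw [List.range_succ, List.map_append, ← ih]; rfl
  exact ⟨w, fun n => hprefixes n ▸ (prefixes n).2⟩

lemma Finset.image_some_eraseNone_of_none_notMem {α : Type*} [DecidableEq (Option α)]
    {A : Finset (Option α)} (h : none ∉ A) : A.eraseNone.image some = A := by
  rw [Finset.image_some_eraseNone, Finset.erase_eq_of_notMem h]

def IsBranch {C : Type*} (W : Set (List C)) (w : ℕ → C) : Prop :=
  ∀ n, (List.range n).map w ∈ W

namespace ColoringLanguage

variable (L : ColoringLanguage.{u}) {σ τ : Type u} {W : Set (List L.Color)}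

lemma aleph0_le_mk_color : ℵ₀ ≤ #L.Color := by
  choose r hr using fun n : ℕ => L.exists_arity (n + 1) (Nat.le_add_left 1 n)
  refine aleph0_le_mk_iff.mpr (Infinite.of_injective r fun m n h => ?_)
  simpa [hr] using congrArg L.arity h

variable {L}

lemma IsAllowed.nil_mem (hW : L.IsAllowed W) : [] ∈ W := by
  obtain ⟨l, hl⟩ := hW.1
  simpa using hW.2.2 l hl 0

lemma IsAllowed.arity_of_isBranch (hW : L.IsAllowed W) {w : ℕ → L.Color} (hw : IsBranch W w)
    (k : ℕ) : L.arity (w k) = k + 1 := by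
  simpa using hW.2.1 _ (hw (k + 1)) k (by simp)

lemma DiagramOf.unique {c : Finset σ → L.Color} {B : Finset σ} {l l' : List L.Color}
    (h : L.DiagramOf c B l) (h' : L.DiagramOf c B l') : l = l' := by
  refine List.ext_getElem? fun k => ?_
  rcases lt_or_ge k B.card with hk | hk
  · obtain ⟨A, hAB, hA⟩ := Finset.exists_subset_card_eq (show k + 1 ≤ B.card from hk)
    have hne : A.Nonempty := Finset.card_pos.mp (by omega)
    simpa [hA] using (h.2 A hAB hne).trans (h'.2 A hAB hne).symm
  · rw [List.getElem?_eq_none (h.1 ▸ hk), List.getElem?_eq_none (h'.1 ▸ hk)]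

lemma mem_of_isLevelDiagram (hW : L.IsAllowed W) {M Y : Set σ} {c : Finset σ → L.Color}
    (hM : L.MemK W M c) (hYM : Y ⊆ M) (hY : Y.Infinite) {l : List L.Color}
    (h : IsLevelDiagram c Y l) : l ∈ W := by
  rcases eq_or_ne l [] with rfl | hl
  · exact hW.nil_mem
  obtain ⟨B, hBY, hB⟩ := hY.exists_subset_card_eq l.length
  have hBne : B.Nonempty := Finset.card_pos.mp (hB ▸ List.length_pos_of_ne_nil hl)
  have hBl (A : Finset σ) (hAB : A ⊆ B) (hA : A.Nonempty) : l[A.card - 1]? = some (c A) :=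
    h A ((Finset.coe_subset.mpr hAB).trans hBY) hA (hB ▸ Finset.card_le_card hAB)
  have hmono : L.Mono c B := fun A₁ A₂ h₁ h₂ hA₁ hcard => Option.some_injective _ <|
    (hBl A₁ h₁ hA₁).symm.trans (hcard ▸ hBl A₂ h₂ (Finset.card_pos.mp (hcard ▸ hA₁.card_pos)))
  obtain ⟨l', hl'W, hl'⟩ := hM.2 B (hBY.trans hYM) hBne hmono
  exact (DiagramOf.unique ⟨hB.symm, hBl⟩ hl') ▸ hl'W

theorem exists_isBranch (hW : L.IsAllowed W) {M : Set σ} {c : Finset σ → L.Color}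
    (hM : L.MemK W M c) (hsize : bethF #L.Color (Order.succ #L.Color).ord ≤ #M) :
    ∃ w, IsBranch W w := by
  have hC := L.aleph0_le_mk_color
  have hω : Ordinal.omega0 < (Order.succ #L.Color).ord :=
    omega0_lt_ord.mpr (hC.trans_lt (Order.lt_succ _))
  obtain ⟨w, hw⟩ := List.exists_forall_map_range
    (fun l => ∀ γ < (Order.succ #L.Color).ord, HasLargeLevelSet M c γ l)
    (fun γ hγ => ⟨M, subset_rfl, isLevelDiagram_nil, by
      simpa using bethF_mono _ (Ordinal.isPrincipal_mul_ord (hC.trans (Order.le_succ _)) hω hγ).le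
        |>.trans hsize⟩)
    fun l => exists_append_forall_hasLargeLevelSet hC
  refine ⟨w, fun n => ?_⟩
  obtain ⟨Y, hYM, hY, hYsize⟩ := hw n 0 (hω.trans' Ordinal.omega0_pos)
  exact mem_of_isLevelDiagram hW hM hYM
    (infinite_coe_iff.mp (aleph0_le_mk_iff.mp (hC.trans ((le_bethF _ _).trans hYsize)))) hY

lemma diagramOf_map_range {c : Finset σ → L.Color} {B : Finset σ} {w : ℕ → L.Color}
    (hB : ∀ A ⊆ B, A.Nonempty → c A = w (A.card - 1)) :
    L.DiagramOf c B ((List.range B.card).map w) := by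
  refine ⟨by simp, fun A hAB hA => ?_⟩
  have : A.card - 1 < B.card := by have := hA.card_pos; have := Finset.card_le_card hAB; omega
  rw [List.getElem?_map, List.getElem?_range this, hB A hAB hA, Option.map_some]

lemma Mono.of_image [DecidableEq τ] {f : σ → τ} (hf : Function.Injective f)
    {c : Finset σ → L.Color} {c' : Finset τ → L.Color} (hc : ∀ A, c' (A.image f) = c A)
    {B : Finset σ} (h : L.Mono c' ↑(B.image f)) : L.Mono c ↑B := by
  intro A₁ A₂ h₁ h₂ hA₁ hcard
  rw [← hc, ← hc]
  refine h _ _ ?_ ?_ (hA₁.image f) ?_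
  · exact Finset.coe_subset.mpr (Finset.image_subset_image (Finset.coe_subset.mp h₁))
  · exact Finset.coe_subset.mpr (Finset.image_subset_image (Finset.coe_subset.mp h₂))
  · rw [Finset.card_image_of_injective _ hf, Finset.card_image_of_injective _ hf, hcard]

lemma DiagramOf.image [DecidableEq τ] {f : σ → τ} (hf : Function.Injective f)
    {c : Finset σ → L.Color} {c' : Finset τ → L.Color} (hc : ∀ A, c' (A.image f) = c A)
    {B : Finset σ} {l : List L.Color} (h : L.DiagramOf c B l) : L.DiagramOf c' (B.image f) l := by
  refine ⟨by rw [Finset.card_image_of_injective _ hf, h.1], fun A hAB hA => ?_⟩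
  obtain ⟨A₀, hA₀B, rfl⟩ := Finset.subset_image_iff.mp hAB
  rw [Finset.card_image_of_injective _ hf, hc]
  exact h.2 A₀ hA₀B (Finset.image_nonempty.mp hA)

variable {w : ℕ → L.Color}

lemma memK_of_isBranch (hW : L.IsAllowed W) (hw : IsBranch W w) (M : Set σ) :
    L.MemK W M fun A => w (A.card - 1) := by
  refine ⟨fun A _ hA => ?_, fun B _ _ _ => ⟨_, hw B.card, diagramOf_map_range fun _ _ _ => rfl⟩⟩
  rw [hW.arity_of_isBranch hw]
  have := hA.card_pos
  omega

noncomputable def extendByBranch (c : Finset σ → L.Color) (w : ℕ → L.Color)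
    (A : Finset (Option σ)) : L.Color :=
  haveI := Classical.propDecidable
  if none ∈ A then w (A.card - 1) else c A.eraseNone

lemma extendByBranch_image_some [DecidableEq (Option σ)] (c : Finset σ → L.Color)
    (A : Finset σ) : extendByBranch c w (A.image some) = c A := by
  simp [extendByBranch]

lemma extendByBranch_of_none_mem (c : Finset σ → L.Color) {A : Finset (Option σ)}
    (h : none ∈ A) : extendByBranch c w A = w (A.card - 1) := by
  simp [extendByBranch, h]

/-- A subset avoiding `none` can trade one of its points for `none`. -/
lemma extendByBranch_of_mono (c : Finset σ → L.Color) {B : Finset (Option σ)} (hB : none ∈ B)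
    (hmono : L.Mono (extendByBranch c w) B) :
    ∀ A ⊆ B, A.Nonempty → extendByBranch c w A = w (A.card - 1) := by
  classical
  intro A hAB ⟨a, ha⟩
  by_cases hA : none ∈ A
  · exact extendByBranch_of_none_mem c hA
  have hcard : (insert none (A.erase a)).card = A.card := by
    rw [Finset.card_insert_of_notMem fun h => hA (Finset.mem_of_mem_erase h),
      Finset.card_erase_add_one ha]
  rw [hmono A _ (Finset.coe_subset.mpr hAB) ?_ ⟨a, ha⟩ hcard.symm, ← hcard]
  · exact extendByBranch_of_none_mem c (Finset.mem_insert_self _ _)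
  · exact Finset.coe_subset.mpr (Finset.insert_subset hB ((A.erase_subset a).trans hAB))

theorem memK_extendByBranch (hW : L.IsAllowed W) (hw : IsBranch W w) {M : Set σ}
    {c : Finset σ → L.Color} (hM : L.MemK W M c) :
    L.MemK W (insert none (some '' M)) (extendByBranch c w) := by
  classical
  have hsome := Option.some_injective σ
  have subset_of_image_subset {A : Finset σ} (h : ↑(A.image some) ⊆ insert none (some '' M)) :
      ↑A ⊆ M := fun a ha => by simpa using h (Finset.mem_image_of_mem some ha)
  refine ⟨fun A hAN hA => ?_, fun B hBN hB hmono => ?_⟩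
  · by_cases h : none ∈ A
    · rw [extendByBranch_of_none_mem c h, hW.arity_of_isBranch hw]
      have := hA.card_pos
      omega
    · rw [← Finset.image_some_eraseNone_of_none_notMem h] at hAN hA ⊢
      rw [extendByBranch_image_some, hM.1 _ (subset_of_image_subset hAN)
        (Finset.image_nonempty.mp hA), Finset.card_image_of_injective _ hsome]
  · by_cases h : none ∈ B
    · exact ⟨_, hw B.card, diagramOf_map_range (extendByBranch_of_mono c h hmono)⟩
    · rw [← Finset.image_some_eraseNone_of_none_notMem h] at hBN hB hmono ⊢
      obtain ⟨l, hlW, hl⟩ := hM.2 _ (subset_of_image_subset hBN) (Finset.image_nonempty.mp hB)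
        (hmono.of_image hsome (extendByBranch_image_some c))
      exact ⟨l, hlW, hl.image hsome (extendByBranch_image_some c)⟩

theorem MemK.exists_proper_extension (hW : L.IsAllowed W) (hw : IsBranch W w) {M : Set σ}
    {c : Finset σ → L.Color} (hM : L.MemK W M c) :
    ∃ (τ : Type u) (N : Set τ) (c' : Finset τ → L.Color) (f : σ → τ),
      L.MemK W N c' ∧ L.Emb f M c N c' ∧ f '' M ⊂ N :=
  ⟨Option σ, insert none (some '' M), extendByBranch c w, some, memK_extendByBranch hW hw hM,
    ⟨(Option.some_injective σ).injOn, subset_insert _ _,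
      fun A _ _ => by classical convert extendByBranch_image_some c A⟩, ssubset_insert (by simp)⟩

end ColoringLanguage

/-- if `K(W)` has a model of size `≥ ℶ_{|L|⁺}(|L|)`, then (1) `K(W)` has
models of every infinite cardinality, and (2) `K(W)` has no maximal models. -/
theorem stmt11 (L : ColoringLanguage.{u}) (W : Set (List L.Color))
    (hW : L.IsAllowed W) (lam : Cardinal.{u})
    (hlam : bethF (Cardinal.mk L.Color) (Order.succ (Cardinal.mk L.Color)).ord ≤ lam)
    (hmodel : ∃ (σ : Type u) (M : Set σ) (c : Finset σ → L.Color),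
      L.MemK W M c ∧ Cardinal.mk ↥M = lam) :
    (∀ μ : Cardinal.{u}, ℵ₀ ≤ μ →
      ∃ (σ : Type u) (M : Set σ) (c : Finset σ → L.Color),
        L.MemK W M c ∧ Cardinal.mk ↥M = μ) ∧
    (∀ (σ : Type u) (M : Set σ) (c : Finset σ → L.Color), L.MemK W M c →
      ∃ (τ : Type u) (N : Set τ) (c' : Finset τ → L.Color) (f : σ → τ),
        L.MemK W N c' ∧ L.Emb f M c N c' ∧ f '' M ⊂ N) := by
  obtain ⟨σ, M, c, hM, rfl⟩ := hmodel
  obtain ⟨w, hw⟩ := ColoringLanguage.exists_isBranch hW hM hlam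
  refine ⟨fun μ _ => ⟨μ.out, univ, _, ColoringLanguage.memK_of_isBranch hW hw univ, ?_⟩,
    fun σ M c hM => hM.exists_proper_extension hW hw⟩
  rw [mk_univ, mk_out]
end
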